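/- arXiv:2507.10116 — 9 statements merged into one kernel-verified Lean document; each statement's English description precedes it below -/
import Mathlib

section
/- Every regular scheme is binary. That is, let (Ω,S) be a scheme on a finite set Ω such that |{β ∈ Ω : (α,β) ∈ s}| = 1 for every α ∈ Ω and every s ∈ S. Then for every m ≥ 1 and all tuples x, y ∈ Ω^m such that for all 1 ≤ i,j ≤ m the class of S containing (x_i, x_j) equals the class containing (y_i, y_j), there exists an automorphism f of (Ω,S) with f(x_i) = y_i for i = 1,…,m. -/
/-- A scheme on a set `Ω`: a partition `S` of `Ω × Ω` containing the diagonal,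
closed under taking converse relations, and such that intersection numbers
are well defined. -/
def IsScheme {Ω : Type*} (S : Set (Set (Ω × Ω))) : Prop :=
  Setoid.IsPartition S ∧
  {p : Ω × Ω | p.1 = p.2} ∈ S ∧
  (∀ s ∈ S, {p : Ω × Ω | (p.2, p.1) ∈ s} ∈ S) ∧
  (∀ r ∈ S, ∀ s ∈ S, ∀ t ∈ S, ∀ p ∈ t, ∀ q ∈ t,
    {γ : Ω | (p.1, γ) ∈ r ∧ (γ, p.2) ∈ s}.ncard =
    {γ : Ω | (q.1, γ) ∈ r ∧ (γ, q.2) ∈ s}.ncard)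

/-- An automorphism of a scheme: a permutation preserving every basis relation. -/
def IsSchemeAut {Ω : Type*} (S : Set (Set (Ω × Ω))) (f : Equiv.Perm Ω) : Prop :=
  ∀ s ∈ S, (fun p : Ω × Ω => (f p.1, f p.2)) '' s = s

/-- A scheme is binary if every pair of tuples with the same array of basis
relations is related by an automorphism. -/
def IsBinary {Ω : Type*} (S : Set (Set (Ω × Ω))) : Prop :=
  ∀ m : ℕ, 0 < m → ∀ x y : Fin m → Ω,
    (∀ i j : Fin m, ∀ s ∈ S, ((x i, x j) ∈ s ↔ (y i, y j) ∈ s)) →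
    ∃ f : Equiv.Perm Ω, IsSchemeAut S f ∧ ∀ i, f (x i) = y i

/-!
In a regular scheme every basis relation is the graph of a permutation, so base points `a`, `b`
and the basis relation of `(a, α)` determine a unique `β` with `(b, β)` in that relation. The map
`α ↦ β` is a bijection, inverted by swapping `a` and `b`, and it preserves every basis relation
`s`: if `(α, β) ∈ s`, the intersection number counting `γ` with `(a, γ)` in the class of `(a, α)`
and `(γ, β) ∈ s` is positive, so the same count at the image pair is positive, and regularity
forces the counted point to be the image of `α`. For `a = x₀` and `b = y₀` this automorphism
sends each `xᵢ` to `yᵢ`.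
-/

def IsSchemeRegular {Ω : Type*} (S : Set (Set (Ω × Ω))) : Prop :=
  ∀ α : Ω, ∀ s ∈ S, {β : Ω | (α, β) ∈ s}.ncard = 1

def HasIntersectionNumbers {Ω : Type*} (S : Set (Set (Ω × Ω))) : Prop :=
  ∀ r ∈ S, ∀ s ∈ S, ∀ t ∈ S, ∀ p ∈ t, ∀ q ∈ t,
    {γ : Ω | (p.1, γ) ∈ r ∧ (γ, p.2) ∈ s}.ncard =
    {γ : Ω | (q.1, γ) ∈ r ∧ (γ, q.2) ∈ s}.ncard

namespace IsSchemeRegular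

variable {Ω : Type*} {S : Set (Set (Ω × Ω))} {s : Set (Ω × Ω)}

theorem exists_mem (hreg : IsSchemeRegular S) (hs : s ∈ S) (α : Ω) : ∃ β, (α, β) ∈ s :=
  Set.nonempty_of_ncard_ne_zero (s := {β | (α, β) ∈ s}) (by rw [hreg α s hs]; exact one_ne_zero)

theorem eq_of_mem (hreg : IsSchemeRegular S) (hs : s ∈ S) {α β γ : Ω} (hβ : (α, β) ∈ s)
    (hγ : (α, γ) ∈ s) : β = γ := by
  obtain ⟨δ, hδ⟩ := Set.ncard_eq_one.mp (hreg α s hs)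
  have hβδ : β ∈ ({δ} : Set Ω) := hδ ▸ hβ
  have hγδ : γ ∈ ({δ} : Set Ω) := hδ ▸ hγ
  exact hβδ.trans hγδ.symm

theorem finite_setOf_mem (hreg : IsSchemeRegular S) (hs : s ∈ S) (α : Ω) :
    {β : Ω | (α, β) ∈ s}.Finite :=
  Set.finite_of_ncard_pos (by rw [hreg α s hs]; exact one_pos)

end IsSchemeRegular

section Transport

variable {Ω : Type*} {S : Set (Set (Ω × Ω))} {s : Set (Ω × Ω)}

noncomputable def schemeTransport (S : Set (Set (Ω × Ω))) (a b α : Ω) : Ω :=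
  @Classical.epsilon Ω ⟨α⟩ fun β => ∀ s ∈ S, (a, α) ∈ s → (b, β) ∈ s

theorem schemeTransport_mem (hS : ∀ p : Ω × Ω, ∃! s ∈ S, p ∈ s) (hreg : IsSchemeRegular S)
    (hs : s ∈ S) {a b α : Ω} (hα : (a, α) ∈ s) : (b, schemeTransport S a b α) ∈ s := by
  obtain ⟨β, hβ⟩ := hreg.exists_mem hs b
  have hspec : ∀ t ∈ S, (a, α) ∈ t → (b, schemeTransport S a b α) ∈ t :=
    Classical.epsilon_spec (p := fun β => ∀ t ∈ S, (a, α) ∈ t → (b, β) ∈ t)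
      ⟨β, fun t ht hαt => Setoid.eq_of_mem_eqv_class hS hs hα ht hαt ▸ hβ⟩
  exact hspec s hs hα

theorem schemeTransport_eq (hS : ∀ p : Ω × Ω, ∃! s ∈ S, p ∈ s) (hreg : IsSchemeRegular S)
    (hs : s ∈ S) {a b α β : Ω} (hα : (a, α) ∈ s) (hβ : (b, β) ∈ s) :
    schemeTransport S a b α = β :=
  hreg.eq_of_mem hs (schemeTransport_mem hS hreg hs hα) hβ

theorem schemeTransport_schemeTransport (hS : ∀ p : Ω × Ω, ∃! s ∈ S, p ∈ s)
    (hreg : IsSchemeRegular S) (a b α : Ω) :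
    schemeTransport S b a (schemeTransport S a b α) = α := by
  obtain ⟨s, ⟨hs, hα⟩, -⟩ := hS (a, α)
  exact schemeTransport_eq hS hreg hs (schemeTransport_mem hS hreg hs hα) hα

theorem schemeTransport_mem_of_mem (hS : ∀ p : Ω × Ω, ∃! s ∈ S, p ∈ s)
    (hreg : IsSchemeRegular S) (hnum : HasIntersectionNumbers S) (hs : s ∈ S) (a b : Ω)
    {α β : Ω} (hαβ : (α, β) ∈ s) : (schemeTransport S a b α, schemeTransport S a b β) ∈ s := by
  obtain ⟨r, ⟨hr, hα⟩, -⟩ := hS (a, α)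
  obtain ⟨t, ⟨ht, hβ⟩, -⟩ := hS (a, β)
  have hcount := hnum r hr s hs t ht (a, β) hβ _ (schemeTransport_mem (b := b) hS hreg ht hβ)
  have hfin : {γ | (a, γ) ∈ r ∧ (γ, β) ∈ s}.Finite :=
    (hreg.finite_setOf_mem hr a).subset fun γ hγ => hγ.1
  have hα_counted : {γ | (a, γ) ∈ r ∧ (γ, β) ∈ s}.ncard ≠ 0 :=
    Set.ncard_ne_zero_of_mem (a := α) ⟨hα, hαβ⟩ hfin
  obtain ⟨γ, hγr, hγs⟩ := Set.nonempty_of_ncard_ne_zero (hcount ▸ hα_counted)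
  rwa [schemeTransport_eq hS hreg hr hα hγr]

noncomputable def schemeTransportPerm (hS : ∀ p : Ω × Ω, ∃! s ∈ S, p ∈ s)
    (hreg : IsSchemeRegular S) (a b : Ω) : Equiv.Perm Ω where
  toFun := schemeTransport S a b
  invFun := schemeTransport S b a
  left_inv := schemeTransport_schemeTransport hS hreg a b
  right_inv := schemeTransport_schemeTransport hS hreg b a

end Transport

theorem isSchemeAut_of_mapsTo {Ω : Type*} {S : Set (Set (Ω × Ω))} (f : Equiv.Perm Ω)
    (hf : ∀ s ∈ S, ∀ p ∈ s, (f p.1, f p.2) ∈ s)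
    (hf_symm : ∀ s ∈ S, ∀ p ∈ s, (f.symm p.1, f.symm p.2) ∈ s) : IsSchemeAut S f := by
  intro s hs
  refine subset_antisymm (Set.image_subset_iff.mpr fun p hp => hf s hs p hp) fun p hp => ?_
  exact ⟨(f.symm p.1, f.symm p.2), hf_symm s hs p hp, by simp⟩

theorem regular_scheme_is_binary_general {Ω : Type*}
    (S : Set (Set (Ω × Ω))) (hS : IsScheme S)
    (hreg : ∀ α : Ω, ∀ s ∈ S, {β : Ω | (α, β) ∈ s}.ncard = 1) :
    IsBinary S := by
  obtain ⟨⟨-, hP⟩, -, -, hnum⟩ := hS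
  intro m hm x y hxy
  let i₀ : Fin m := ⟨0, hm⟩
  refine ⟨schemeTransportPerm hP hreg (x i₀) (y i₀), ?_, fun i => ?_⟩
  · exact isSchemeAut_of_mapsTo _
      (fun _ hs _ hp => schemeTransport_mem_of_mem hP hreg hnum hs (x i₀) (y i₀) hp)
      (fun _ hs _ hp => schemeTransport_mem_of_mem hP hreg hnum hs (y i₀) (x i₀) hp)
  · obtain ⟨s, ⟨hs, hi⟩, -⟩ := hP (x i₀, x i)
    exact schemeTransport_eq hP hreg hs hi ((hxy i₀ i s hs).mp hi)

/-- every regular scheme is binary. -/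
theorem regular_scheme_is_binary {Ω : Type*} [Fintype Ω]
    (S : Set (Set (Ω × Ω))) (hS : IsScheme S)
    (hreg : ∀ α : Ω, ∀ s ∈ S, {β : Ω | (α, β) ∈ s}.ncard = 1) :
    IsBinary S :=
  regular_scheme_is_binary_general S hS hreg
end

section
/- The tensor product of two binary schemes is binary. That is, if (Ω,S) and (Ω',S') are binary schemes on finite sets Ω and Ω', then the scheme on Ω×Ω' whose classes are the relations s⊗s' = {((α,α'),(β,β')) : (α,β) ∈ s, (α',β') ∈ s'} for s ∈ S and s' ∈ S' is binary. -/
/-- The tensor product of two schemes: the classes are the relations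
`s ⊗ s' = {((α,α'),(β,β')) : (α,β) ∈ s, (α',β') ∈ s'}`. -/
def tensorScheme {Ω Ω' : Type*} (S : Set (Set (Ω × Ω))) (S' : Set (Set (Ω' × Ω'))) :
    Set (Set ((Ω × Ω') × (Ω × Ω'))) :=
  {t | ∃ s ∈ S, ∃ s' ∈ S',
    t = {p : (Ω × Ω') × (Ω × Ω') | (p.1.1, p.2.1) ∈ s ∧ (p.1.2, p.2.2) ∈ s'}}


lemma aut_mem_iff {Ω : Type*} {S : Set (Set (Ω × Ω))} {f : Equiv.Perm Ω}
    (h : IsSchemeAut S f) {s : Set (Ω × Ω)} (hs : s ∈ S) (a b : Ω) :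
    (f a, f b) ∈ s ↔ (a, b) ∈ s := by
  constructor
  · intro h1
    rw [← h s hs] at h1
    obtain ⟨⟨c, d⟩, hcd, heq⟩ := h1
    simp only [Prod.mk.injEq] at heq
    obtain ⟨h1, h2⟩ := heq
    rwa [← f.injective h1, ← f.injective h2]
  · intro h1
    rw [← h s hs]
    exact ⟨(a, b), h1, rfl⟩

/-- the tensor product of two binary schemes is binary. -/
theorem tensor_of_binary_is_binary {Ω Ω' : Type*} [Fintype Ω] [Fintype Ω']
    (S : Set (Set (Ω × Ω))) (S' : Set (Set (Ω' × Ω')))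
    (hS : IsScheme S) (hS' : IsScheme S')
    (hb : IsBinary S) (hb' : IsBinary S') :
    IsBinary (tensorScheme S S') := by
  intro m hm x y hxy
  have key1 : ∀ i j : Fin m, ∀ s ∈ S, (((x i).1, (x j).1) ∈ s ↔ ((y i).1, (y j).1) ∈ s) := by
    intro i j s hs
    constructor
    · intro h
      obtain ⟨s', ⟨hs'S, hmem⟩, -⟩ := hS'.1.2 ((x i).2, (x j).2)
      exact ((hxy i j _ ⟨s, hs, s', hs'S, rfl⟩).1 ⟨h, hmem⟩).1
    · intro h
      obtain ⟨s', ⟨hs'S, hmem⟩, -⟩ := hS'.1.2 ((y i).2, (y j).2)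
      exact ((hxy i j _ ⟨s, hs, s', hs'S, rfl⟩).2 ⟨h, hmem⟩).1
  have key2 : ∀ i j : Fin m, ∀ s' ∈ S', (((x i).2, (x j).2) ∈ s' ↔ ((y i).2, (y j).2) ∈ s') := by
    intro i j s' hs'
    constructor
    · intro h
      obtain ⟨s, ⟨hsS, hmem⟩, -⟩ := hS.1.2 ((x i).1, (x j).1)
      exact ((hxy i j _ ⟨s, hsS, s', hs', rfl⟩).1 ⟨hmem, h⟩).2
    · intro h
      obtain ⟨s, ⟨hsS, hmem⟩, -⟩ := hS.1.2 ((y i).1, (y j).1)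
      exact ((hxy i j _ ⟨s, hsS, s', hs', rfl⟩).2 ⟨hmem, h⟩).2
  obtain ⟨f, hf, hfx⟩ := hb m hm (fun i => (x i).1) (fun i => (y i).1) key1
  obtain ⟨f', hf', hfx'⟩ := hb' m hm (fun i => (x i).2) (fun i => (y i).2) key2
  refine ⟨Equiv.prodCongr f f', ?_, ?_⟩
  · rintro t ⟨s, hs, s', hs', rfl⟩
    ext ⟨⟨a, a'⟩, ⟨b, b'⟩⟩
    constructor
    · rintro ⟨⟨⟨c, c'⟩, ⟨d, d'⟩⟩, ⟨h1, h2⟩, heq⟩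
      simp only [Equiv.prodCongr_apply, Prod.map, Prod.mk.injEq] at heq
      obtain ⟨⟨e1, e2⟩, e3, e4⟩ := heq
      subst e1; subst e2; subst e3; subst e4
      exact ⟨(aut_mem_iff hf hs c d).2 h1, (aut_mem_iff hf' hs' c' d').2 h2⟩
    · rintro ⟨h1, h2⟩
      refine ⟨((f.symm a, f'.symm a'), (f.symm b, f'.symm b')), ⟨?_, ?_⟩, by simp⟩
      · rw [← aut_mem_iff hf hs]; simpa using h1
      · rw [← aut_mem_iff hf' hs']; simpa using h2
  · intro i
    have h1 := hfx i
    have h2 := hfx' i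
    exact Prod.ext h1 h2
end

section
/- (Schur–Wielandt, first part.) Let G be a finite abelian group of order n and let 𝒮 be an S-ring partition over G. Then for every integer m coprime to n and every class X ∈ 𝒮, the set X^(m) = {x^m : x ∈ X} is again a class of 𝒮. -/
/-- An S-ring partition over a group `G`: a partition of `G` containing `{1}`,
closed under taking inverses, and with well-defined structure constants. -/
def IsSRing {G : Type*} [Group G] (S : Set (Set G)) : Prop :=
  Setoid.IsPartition S ∧
  {(1 : G)} ∈ S ∧
  (∀ X ∈ S, (fun x : G => x⁻¹) '' X ∈ S) ∧
  (∀ X ∈ S, ∀ Y ∈ S, ∀ Z ∈ S, ∀ z ∈ Z, ∀ z' ∈ Z,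
    {p : G × G | p.1 ∈ X ∧ p.2 ∈ Y ∧ p.1 * p.2 = z}.ncard =
    {p : G × G | p.1 ∈ X ∧ p.2 ∈ Y ∧ p.1 * p.2 = z'}.ncard)

/-- An `S`-set: a union of classes of the partition `S`. -/
def IsSSet {G : Type*} (S : Set (Set G)) (X : Set G) : Prop :=
  ∃ T ⊆ S, X = ⋃₀ T

/-!
Work in the group algebra `𝔽_p[G]`. Since the structure constants of `S` are well defined, the
elements whose coefficients are constant on the classes of `S` form a subring. For a prime
`p ∤ |G|` and a union of classes `Y`, Frobenius gives `(∑_{y ∈ Y} y)^p = ∑_{y ∈ Y} y^p`, and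
`x ↦ x^p` is injective, so `Y^(p)` is again a union of classes. Factoring exponents into primes,
and using inversion for negative ones, the same holds for `Y^(m)` whenever `m` is coprime to `|G|`.
If `am ≡ 1 (mod |G|)`, then `x ↦ x^m` and `x ↦ x^a` are mutually inverse and both preserve unions
of classes, so `x ↦ x^m` maps the minimal nonempty ones, the classes, to classes.
-/

open Finset MonoidAlgebra

section Partition

variable {α : Type*} {S : Set (Set α)}

theorem isSSet_of_mem {X : Set α} (hX : X ∈ S) : IsSSet S X :=
  ⟨{X}, Set.singleton_subset_iff.mpr hX, (Set.sUnion_singleton X).symm⟩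

theorem isSSet_iff (hS : Setoid.IsPartition S) {Y : Set α} :
    IsSSet S Y ↔ ∀ Z ∈ S, ∀ z ∈ Z, z ∈ Y → Z ⊆ Y := by
  constructor
  · rintro ⟨T, hT, rfl⟩ Z hZ z hzZ ⟨W, hW, hzW⟩
    rw [Setoid.eq_of_mem_eqv_class hS.2 hZ hzZ (hT hW) hzW]
    exact Set.subset_sUnion_of_mem hW
  · intro h
    refine ⟨{Z ∈ S | Z ⊆ Y}, fun Z hZ => hZ.1, ?_⟩
    refine subset_antisymm (fun y hy => ?_) (Set.sUnion_subset fun Z hZ => hZ.2)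
    obtain ⟨Z, ⟨hZ, hyZ⟩, -⟩ := hS.2 y
    exact ⟨Z, ⟨hZ, h Z hZ y hyZ hy⟩, hyZ⟩

theorem Setoid.IsPartition.image_mem_of_isSSet (hS : Setoid.IsPartition S) (e : α ≃ α)
    (he : ∀ Y, IsSSet S Y → IsSSet S (e '' Y))
    (he' : ∀ Y, IsSSet S Y → IsSSet S (e.symm '' Y)) {X : Set α} (hX : X ∈ S) :
    e '' X ∈ S := by
  obtain ⟨x, hx⟩ := Setoid.nonempty_of_mem_partition hS hX
  obtain ⟨Z, ⟨hZ, hxZ⟩, -⟩ := hS.2 (e x)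
  have hZX : Z ⊆ e '' X :=
    (isSSet_iff hS).1 (he X (isSSet_of_mem hX)) Z hZ _ hxZ ⟨x, hx, rfl⟩
  have hXZ : X ⊆ e.symm '' Z :=
    (isSSet_iff hS).1 (he' Z (isSSet_of_mem hZ)) X hX x hx ⟨e x, hxZ, e.symm_apply_apply x⟩
  have hZX' : e.symm '' Z = X :=
    subset_antisymm (e.symm_image_image X ▸ Set.image_mono hZX) hXZ
  rwa [← hZX', e.image_symm_image]

noncomputable def Setoid.IsPartition.classOf (hS : Setoid.IsPartition S) (a : α) : S :=
  ⟨(hS.2 a).choose, (hS.2 a).choose_spec.1.1⟩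

theorem Setoid.IsPartition.classOf_eq_iff (hS : Setoid.IsPartition S) {a : α} {D : S} :
    hS.classOf a = D ↔ a ∈ (D : Set α) := by
  constructor
  · rintro rfl
    exact (hS.2 a).choose_spec.1.2
  · intro h
    exact Subtype.ext ((hS.2 a).choose_spec.2 D ⟨D.2, h⟩).symm

def ConstOnClasses {β : Type*} (S : Set (Set α)) (f : α → β) : Prop :=
  ∀ Z ∈ S, ∀ z ∈ Z, ∀ z' ∈ Z, f z = f z'

theorem isSSet_iff_constOnClasses_indicator {k : Type*} [Zero k] [One k] [NeZero (1 : k)]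
    (hS : Setoid.IsPartition S) {Y : Set α} :
    IsSSet S Y ↔ ConstOnClasses S (Y.indicator (1 : α → k)) := by
  classical
  rw [isSSet_iff hS]
  constructor
  · intro h Z hZ z hz z' hz'
    have hzz' : z ∈ Y ↔ z' ∈ Y := ⟨fun hy => h Z hZ z hz hy hz', fun hy => h Z hZ z' hz' hy hz⟩
    simp only [Set.indicator_apply, hzz', Pi.one_apply]
  · intro h Z hZ z hz hy z' hz'
    by_contra hy'
    simpa [Set.indicator_of_mem hy, Set.indicator_of_notMem hy'] using h Z hZ z hz z' hz'

end Partition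

theorem coeff_sum_single_one {G k : Type*} [CommSemiring k] (s : Finset G) :
    ⇑(∑ x ∈ s, single x (1 : k)).coeff = (s : Set G).indicator 1 := by
  classical
  ext w
  simp [coeff_sum, Finsupp.finsetSum_apply, Finsupp.single_apply, Set.indicator_apply]

theorem sum_single_one_pow_char {G : Type*} [CommMonoid G] (p : ℕ) [Fact p.Prime]
    (s : Finset G) :
    (∑ x ∈ s, single x (1 : ZMod p)) ^ p = ∑ x ∈ s, single (x ^ p) 1 := by
  have := charP_of_injective_algebraMap' (ZMod p) (A := (ZMod p)[G]) p
  simp only [sum_pow_char, single_pow, one_pow]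

section Group

variable {G : Type*} [Group G] {S : Set (Set G)}

theorem IsSRing.constOnClasses_mul [Fintype G] {k : Type*} [CommSemiring k] (hS : IsSRing S)
    {f g : k[G]} (hf : ConstOnClasses S f.coeff) (hg : ConstOnClasses S g.coeff) :
    ConstOnClasses S (f * g).coeff := by
  classical
  obtain ⟨hpart, -, -, hcount⟩ := hS
  have regroup : ∀ w : G, (f * g).coeff w = ∑ DE : S × S,
      ∑ q ∈ univ.filter (fun q : G × G => q.1 * q.2 = w) with
        (hpart.classOf q.1, hpart.classOf q.2) = DE, f.coeff q.1 * g.coeff q.2 := fun w => by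
    rw [coeff_mul_antidiag f g w (univ.filter fun q => q.1 * q.2 = w) (by simp), sum_fiberwise]
  -- As `f` and `g` are constant on `D` and `E`, the block of `(D, E)` sees `w` only through a
  -- structure constant.
  have block : ∀ (D E : S) (d e : G), d ∈ (D : Set G) → e ∈ (E : Set G) → ∀ w : G,
      ∑ q ∈ univ.filter (fun q : G × G => q.1 * q.2 = w) with
        (hpart.classOf q.1, hpart.classOf q.2) = (D, E), f.coeff q.1 * g.coeff q.2 =
      {q : G × G | q.1 ∈ (D : Set G) ∧ q.2 ∈ (E : Set G) ∧ q.1 * q.2 = w}.ncard •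
        (f.coeff d * g.coeff e) := by
    intro D E d e hd he w
    have hval : ∀ q ∈ (univ.filter fun q : G × G => q.1 * q.2 = w).filter
        (fun q => (hpart.classOf q.1, hpart.classOf q.2) = (D, E)),
        f.coeff q.1 * g.coeff q.2 = f.coeff d * g.coeff e := by
      intro q hq
      simp only [mem_filter, Prod.mk.injEq, hpart.classOf_eq_iff] at hq
      rw [hf D D.2 q.1 hq.2.1 d hd, hg E E.2 q.2 hq.2.2 e he]
    rw [sum_congr rfl hval, sum_const, ← Set.ncard_coe_finset]
    congr 2
    ext q
    simp only [coe_filter, mem_filter, mem_univ, true_and, Prod.mk.injEq, hpart.classOf_eq_iff,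
      Set.mem_ofPred_eq]
    tauto
  intro Z hZ z hz z' hz'
  rw [regroup z, regroup z']
  refine sum_congr rfl fun ⟨D, E⟩ _ => ?_
  obtain ⟨d, hd⟩ := Setoid.nonempty_of_mem_partition hpart D.2
  obtain ⟨e, he⟩ := Setoid.nonempty_of_mem_partition hpart E.2
  rw [block D E d e hd he z, block D E d e hd he z', hcount D D.2 E E.2 Z hZ z hz z' hz']

/-- The S-ring itself, as the subring of `k[G]` spanned by the sums of the classes of `S`. -/
def IsSRing.subsemiring [Fintype G] (hS : IsSRing S) (k : Type*) [CommSemiring k] :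
    Subsemiring k[G] where
  carrier := {f | ConstOnClasses S f.coeff}
  mul_mem' := hS.constOnClasses_mul
  one_mem' := by
    classical
    intro Z hZ z hz z' hz'
    simp only [one_def, coeff_single, Finsupp.single_apply]
    by_cases h1 : (1 : G) ∈ Z
    · obtain rfl := Setoid.eq_of_mem_eqv_class hS.1.2 hZ h1 hS.2.1 rfl
      rw [Set.mem_singleton_iff.1 hz, Set.mem_singleton_iff.1 hz']
    · rw [if_neg fun h : 1 = z => h1 (h ▸ hz), if_neg fun h : 1 = z' => h1 (h ▸ hz')]
  add_mem' := fun hf hg Z hZ z hz z' hz' => by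
    simp only [coeff_add, Finsupp.add_apply, hf Z hZ z hz z' hz', hg Z hZ z hz z' hz']
  zero_mem' := fun _ _ _ _ _ _ => rfl

theorem IsSRing.mem_subsemiring [Fintype G] {k : Type*} [CommSemiring k] (hS : IsSRing S)
    {f : k[G]} : f ∈ hS.subsemiring k ↔ ConstOnClasses S f.coeff :=
  Iff.rfl

theorem IsSRing.isSSet_image_inv (hS : IsSRing S) {Y : Set G} (hY : IsSSet S Y) :
    IsSSet S ((·⁻¹) '' Y) := by
  obtain ⟨T, hT, rfl⟩ := hY
  refine ⟨Set.image (·⁻¹) '' T, ?_, by rw [Set.image_sUnion, Set.sUnion_image]⟩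
  rintro _ ⟨X, hX, rfl⟩
  exact hS.2.2.1 X (hT hX)

theorem zpow_zpow_eq_self_of_mul_add_card [Fintype G] {m a b : ℤ}
    (h : a * m + b * Fintype.card G = 1) (x : G) : (x ^ m) ^ a = x := by
  rw [← zpow_mul, show m * a = 1 - Fintype.card G * b by linear_combination h, zpow_sub, zpow_one,
    zpow_mul, zpow_natCast, pow_card_eq_one, one_zpow, inv_one, mul_one]

end Group

section CommGroup

variable {G : Type*} [CommGroup G] [Fintype G] {S : Set (Set G)}

theorem IsSRing.isSSet_image_pow_prime (hS : IsSRing S) {p : ℕ} (hp : p.Prime)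
    (hpG : p.Coprime (Fintype.card G)) {Y : Set G} (hY : IsSSet S Y) :
    IsSSet S ((· ^ p) '' Y) := by
  classical
  have := Fact.mk hp
  have hinj : Function.Injective (· ^ p : G → G) :=
    (Nat.Coprime.pow_left_bijective (by rwa [Nat.card_eq_fintype_card, Nat.coprime_comm])).1
  rw [isSSet_iff_constOnClasses_indicator (k := ZMod p) hS.1] at hY ⊢
  have hmem : ∑ x ∈ Y.toFinset, single x 1 ∈ hS.subsemiring (ZMod p) := by
    rwa [hS.mem_subsemiring, coeff_sum_single_one, Set.coe_toFinset]
  have hpow := pow_mem hmem p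
  rwa [sum_single_one_pow_char, ← sum_image (f := fun x => single x (1 : ZMod p)) hinj.injOn,
    hS.mem_subsemiring, coeff_sum_single_one, coe_image, Set.coe_toFinset] at hpow

theorem IsSRing.isSSet_image_pow (hS : IsSRing S) {k : ℕ} (hk : k.Coprime (Fintype.card G))
    {Y : Set G} (hY : IsSSet S Y) : IsSSet S ((· ^ k) '' Y) := by
  induction k using Nat.recOnMul generalizing Y with
  | zero =>
    simp only [pow_zero]
    rcases Y.eq_empty_or_nonempty with rfl | hne
    · rw [Set.image_empty]
      exact ⟨∅, Set.empty_subset S, Set.sUnion_empty.symm⟩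
    · rw [hne.image_const]
      exact isSSet_of_mem hS.2.1
  | one => simpa using hY
  | prime p hp => exact hS.isSSet_image_pow_prime hp hk hY
  | mul a b iha ihb =>
    rw [Nat.coprime_mul_iff_left] at hk
    have himage : (· ^ (a * b)) '' Y = (· ^ b) '' ((· ^ a) '' Y) := by
      simp only [Set.image_image, pow_mul]
    rw [himage]
    exact ihb hk.2 (iha hk.1 hY)

theorem IsSRing.isSSet_image_zpow (hS : IsSRing S) {m : ℤ}
    (hm : IsCoprime m (Fintype.card G : ℤ)) {Y : Set G} (hY : IsSSet S Y) :
    IsSSet S ((· ^ m) '' Y) := by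
  obtain ⟨k, rfl | rfl⟩ := m.eq_nat_or_neg
  · rw [Int.isCoprime_iff_gcd_eq_one, Int.gcd_natCast_natCast] at hm
    simpa using hS.isSSet_image_pow hm hY
  · rw [IsCoprime.neg_left_iff, Int.isCoprime_iff_gcd_eq_one, Int.gcd_natCast_natCast] at hm
    simp only [zpow_neg, zpow_natCast]
    rw [← Set.image_image (·⁻¹) (· ^ k)]
    exact hS.isSSet_image_inv (hS.isSSet_image_pow hm hY)

end CommGroup

/-- Schur–Wielandt, first part: for an S-ring over a finite
abelian group of order `n`, the `m`-th power map, for `m` coprime to `n`,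
takes basic sets to basic sets. -/
theorem schur_wielandt_pow {G : Type*} [CommGroup G] [Fintype G]
    (S : Set (Set G)) (hS : IsSRing S)
    (m : ℤ) (hm : Int.gcd m (Fintype.card G) = 1) :
    ∀ X ∈ S, (fun x : G => x ^ m) '' X ∈ S := by
  intro X hX
  obtain ⟨a, b, hab⟩ : IsCoprime m (Fintype.card G : ℤ) := Int.isCoprime_iff_gcd_eq_one.mpr hm
  have hmG : IsCoprime m (Fintype.card G : ℤ) := ⟨a, b, hab⟩
  have haG : IsCoprime a (Fintype.card G : ℤ) := ⟨m, b, by linear_combination hab⟩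
  let e : G ≃ G :=
    { toFun := (· ^ m)
      invFun := (· ^ a)
      left_inv := zpow_zpow_eq_self_of_mul_add_card hab
      right_inv := zpow_zpow_eq_self_of_mul_add_card (m := a) (a := m) (b := b)
        (by linear_combination hab) }
  exact hS.1.image_mem_of_isSSet e (fun _ => hS.isSSet_image_zpow hmG)
    (fun _ => hS.isSSet_image_zpow haG) hX
end

section
/- Let G be a finite cyclic group and 𝒮 an S-ring partition over G. Then every normalized isomorphism f of (G,𝒮) to itself leaves every 𝒮-subgroup fixed: if f : G → G is a bijection with f(1) = 1 such that for every X ∈ 𝒮 there exists X' ∈ 𝒮 with the property that for all x,y ∈ G one has yx⁻¹ ∈ X if and only if f(y)f(x)⁻¹ ∈ X', then f(H) = H for every subgroup H of G that is a union of classes of 𝒮. -/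
open scoped Classical

/-- In a finite cyclic group, subgroups of equal cardinality are equal. -/
lemma cyclic_subgroup_eq_of_card_eq {G : Type*} [Group G] [Fintype G] [IsCyclic G]
    (H K : Subgroup G) (h : Nat.card H = Nat.card K) : H = K := by
  have key : ∀ L : Subgroup G, (L : Set G) = {a : G | a ^ Nat.card L = 1} := by
    intro L
    have hd : 0 < Nat.card L := Nat.card_pos
    have hsub : (L : Set G) ⊆ {a : G | a ^ Nat.card L = 1} := by
      intro x hx
      have h1 : (⟨x, hx⟩ : L) ^ Nat.card L = 1 := pow_card_eq_one'
      have h2 : x ^ Nat.card L = 1 := by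
        have := congrArg (Subtype.val) h1
        rwa [SubmonoidClass.coe_pow] at this
      exact h2
    have hle : {a : G | a ^ Nat.card L = 1}.ncard ≤ Nat.card L := by
      have := IsCyclic.card_pow_eq_one_le (α := G) hd
      rw [Set.ncard_eq_toFinset_card']
      simpa [Set.toFinset_setOf] using this
    refine Set.eq_of_subset_of_ncard_le hsub ?_ (Set.toFinite _)
    calc {a : G | a ^ Nat.card L = 1}.ncard ≤ Nat.card L := hle
    _ = (L : Set G).ncard := (Nat.card_coe_set_eq _).symm
  apply SetLike.coe_injective
  rw [key H, key K, h]


/-- every normalized isomorphism of a circulant S-ring to itself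
leaves every `S`-subgroup fixed. -/
theorem circulant_normalized_iso_fixes_subgroups {G : Type*} [Group G]
    [Fintype G] [IsCyclic G]
    (S : Set (Set G)) (hS : IsSRing S)
    (f : G → G) (hbij : Function.Bijective f) (hone : f 1 = 1)
    (hiso : ∀ X ∈ S, ∃ X' ∈ S, ∀ x y : G, (y * x⁻¹ ∈ X ↔ f y * (f x)⁻¹ ∈ X'))
    (H : Subgroup G) (hH : IsSSet S (H : Set G)) :
    f '' (H : Set G) = (H : Set G) := by
  obtain ⟨T, hTS, hT⟩ := hH
  have key : ∀ x ∈ (H : Set G), ∀ y ∈ (H : Set G),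
      f y * (f x)⁻¹ ∈ f '' (H : Set G) := by
    intro x hx y hy
    have hmem : y * x⁻¹ ∈ (H : Set G) := H.mul_mem hy (H.inv_mem hx)
    rw [hT] at hmem
    obtain ⟨X, hXT, hXmem⟩ := hmem
    obtain ⟨X', hX'S, hX'⟩ := hiso X (hTS hXT)
    have h1 : f y * (f x)⁻¹ ∈ X' := (hX' x y).mp hXmem
    obtain ⟨z, hz⟩ := hbij.2 (f y * (f x)⁻¹)
    have hzX : z ∈ X := by
      have h2 := hX' 1 z
      simp only [inv_one, mul_one, hone] at h2
      exact h2.mpr (by rw [hz]; exact h1)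
    exact ⟨z, by rw [hT]; exact ⟨X, hXT, hzX⟩, hz⟩
  have honem : (1 : G) ∈ f '' (H : Set G) := ⟨1, H.one_mem, hone⟩
  have hinv : ∀ a ∈ f '' (H : Set G), a⁻¹ ∈ f '' (H : Set G) := by
    rintro a ⟨x, hx, rfl⟩
    simpa [hone] using key x hx 1 H.one_mem
  have hmul : ∀ a ∈ f '' (H : Set G), ∀ b ∈ f '' (H : Set G),
      a * b ∈ f '' (H : Set G) := by
    rintro a ha b hb
    obtain ⟨x, hx, hfx⟩ := hinv b hb
    obtain ⟨y, hy, rfl⟩ := ha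
    have h3 := key x hx y hy
    rw [hfx, inv_inv] at h3
    exact h3
  let K : Subgroup G :=
    { carrier := f '' (H : Set G)
      one_mem' := honem
      mul_mem' := fun ha hb => hmul _ ha _ hb
      inv_mem' := fun ha => hinv _ ha }
  have hcard : Nat.card K = Nat.card H := by
    have h4 : (K : Set G).ncard = (H : Set G).ncard := by
      show (f '' (H : Set G)).ncard = _
      exact Set.ncard_image_of_injective _ hbij.1
    rw [← Nat.card_coe_set_eq, ← Nat.card_coe_set_eq] at h4
    exact h4
  have : K = H := cyclic_subgroup_eq_of_card_eq K H hcard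
  exact congrArg (fun (L : Subgroup G) => (L : Set G)) this
end

section
/- Let G be a finite cyclic group of odd order and let 𝒮 be a normal S-ring partition over G (the group of right translations is a normal subgroup of Aut(𝒮)). Then every normalized isomorphism from (G,𝒮) to itself is an automorphism of the group G: if f : G → G is a bijection with f(1) = 1 such that for every X ∈ 𝒮 there exists X' ∈ 𝒮 with the property that for all x,y ∈ G one has yx⁻¹ ∈ X if and only if f(y)f(x)⁻¹ ∈ X', then f is a group automorphism of G. -/
/-- An automorphism of the S-ring `S`: a permutation `f` of `G` such that
for all `x, y` and all `X ∈ S`, `y·x⁻¹ ∈ X` iff `f(y)·f(x)⁻¹ ∈ X`. -/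
def IsSRingAut {G : Type*} [Group G] (S : Set (Set G)) (f : Equiv.Perm G) : Prop :=
  ∀ X ∈ S, ∀ x y : G, (y * x⁻¹ ∈ X ↔ f y * (f x)⁻¹ ∈ X)

/-- The S-ring `S` is normal: the group of right translations is a normal
subgroup of `Aut(S)`, i.e. every automorphism of `S` conjugates each right
translation to a right translation. -/
def IsNormalSRing {G : Type*} [Group G] (S : Set (Set G)) : Prop :=
  ∀ f : Equiv.Perm G, IsSRingAut S f →
    ∀ g : G, ∃ g' : G, ∀ x : G, f (x * g) = f x * g'

/-!
For `g : G` put `k_g = R_g⁻¹ ∘ f⁻¹ ∘ R_{f g} ∘ f`, where `R_h` is right translation by `h`.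
Since `f` maps basic relations to basic relations, `k_g` is an automorphism of `𝒮` fixing `1`,
hence a group endomorphism by normality, and `f (k_g x * g) = f x * f g`. As `G` is abelian,
`k_g x * g = k_x g * x`, and this makes the diagonal `q t = k_t t` satisfy
`q y / q x = k_{yx} (y / x)`. So `q` is again an automorphism of `𝒮` fixing `1`, hence
multiplicative, which gives `k_{x²t} t = k_t t`. In a group of odd order every element is a
square, so `k_u t = k_1 t = t` for all `u`, i.e. `f (x * g) = f x * f g`.
-/

open Equiv (Perm)

def IsSRingIso {G : Type*} [Group G] (S : Set (Set G)) (f : G → G) : Prop :=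
  ∀ X ∈ S, ∃ X' ∈ S, ∀ x y : G, (y * x⁻¹ ∈ X ↔ f y * (f x)⁻¹ ∈ X')

section Group

variable {G : Type*} [Group G] {S : Set (Set G)}

theorem IsSRingAut.trans {φ ψ : Perm G} (hφ : IsSRingAut S φ) (hψ : IsSRingAut S ψ) :
    IsSRingAut S (φ.trans ψ) :=
  fun X hX x y => (hφ X hX x y).trans (hψ X hX (φ x) (φ y))

theorem isSRingAut_mulRight (g : G) : IsSRingAut S (Equiv.mulRight g) := fun X _ x y => by
  simp [mul_assoc]

theorem IsSRingIso.isSRingAut_conj {F φ : Perm G} (hF : IsSRingIso S F)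
    (hφ : IsSRingAut S φ) : IsSRingAut S ((F.trans φ).trans F.symm) := by
  intro X hX x y
  obtain ⟨X', hX', hFX⟩ := hF X hX
  simp only [Equiv.trans_apply]
  rw [hFX, hφ X' hX', hFX, Equiv.apply_symm_apply, Equiv.apply_symm_apply]

theorem IsNormalSRing.map_mul (hnorm : IsNormalSRing S) {φ : Perm G} (hφ : IsSRingAut S φ)
    (h1 : φ 1 = 1) (x y : G) : φ (x * y) = φ x * φ y := by
  obtain ⟨y', hy'⟩ := hnorm φ hφ y
  have hy := hy' 1
  rw [one_mul, h1, one_mul] at hy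
  rw [hy', hy]

theorem exists_mul_self_eq_of_odd_card [Finite G] (hodd : Odd (Nat.card G)) (u : G) :
    ∃ x : G, x * x = u := by
  obtain ⟨x, hx⟩ := (Nat.Coprime.pow_left_bijective hodd.coprime_two_right).surjective u
  exact ⟨x, (sq x).symm.trans hx⟩

/-- The map `k_g`; all `k_g` are trivial exactly when `F` is multiplicative. -/
def conjTranslate (F : Perm G) (g : G) : Perm G :=
  ((F.trans (Equiv.mulRight (F g))).trans F.symm).trans (Equiv.mulRight g⁻¹)

theorem apply_conjTranslate_mul (F : Perm G) (g x : G) :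
    F (conjTranslate F g x * g) = F x * F g := by
  simp [conjTranslate]

theorem conjTranslate_one {F : Perm G} (h1 : F 1 = 1) : conjTranslate F 1 = Equiv.refl G := by
  ext x
  simp [conjTranslate, h1]

theorem IsSRingIso.isSRingAut_conjTranslate {F : Perm G} (hF : IsSRingIso S F) (g : G) :
    IsSRingAut S (conjTranslate F g) :=
  (hF.isSRingAut_conj (isSRingAut_mulRight _)).trans (isSRingAut_mulRight _)

end Group

section CommGroup

variable {G : Type*} [CommGroup G]

theorem conjTranslate_mul_comm (F : Perm G) (g x : G) :
    conjTranslate F g x * g = conjTranslate F x g * x :=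
  F.injective <| by rw [apply_conjTranslate_mul, apply_conjTranslate_mul, mul_comm]

theorem diag_div_diag (k : G → G →* G) (hsymm : ∀ g x, k g x * g = k x g * x) (x y : G) :
    k y y / k x x = k (y * x) (y / x) := by
  have hy : k (y * x) y * (y * x) = k y y * k y x * y := by
    rw [hsymm, map_mul]
  have hx : k (y * x) x * (y * x) = k x y * k x x * x := by
    rw [hsymm, map_mul]
  rw [map_div, eq_div_of_mul_eq' hy, eq_div_of_mul_eq' hx, div_div_div_cancel_right,
    mul_assoc (k y y), hsymm y x, mul_right_comm (k x y), mul_comm _ (k x x), mul_div_mul_right_eq_div]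

theorem exists_isSRingAut_diag [Finite G] {S : Set (Set G)} (k : G → Perm G)
    (haut : ∀ g, IsSRingAut S (k g))
    (hdiv : ∀ x y, k y y / k x x = k (y * x) y / k (y * x) x) :
    ∃ Q : Perm G, (∀ t, Q t = k t t) ∧ IsSRingAut S Q := by
  have hinj : Function.Injective fun t => k t t := fun x y (hxy : k x x = k y y) => by
    have hxy' := hdiv x y
    rw [← hxy, div_self', eq_comm, div_eq_one] at hxy'
    exact ((k (y * x)).injective hxy').symm
  refine ⟨Equiv.ofBijective _ (Finite.injective_iff_bijective.mp hinj), fun _ => rfl, ?_⟩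
  intro X hX x y
  rw [haut (y * x) X hX x y]
  simp only [Equiv.ofBijective_apply, ← div_eq_mul_inv, hdiv]

theorem eq_refl_of_isNormalSRing [Finite G] (hodd : Odd (Nat.card G)) {S : Set (Set G)}
    (hnorm : IsNormalSRing S) (k : G → Perm G) (haut : ∀ g, IsSRingAut S (k g))
    (hone : k 1 = Equiv.refl G) (hsymm : ∀ g x, k g x * g = k x g * x) (g : G) :
    k g = Equiv.refl G := by
  have hk1 (g : G) : k g 1 = 1 := by simpa [hone] using hsymm g 1
  let K (g : G) : G →* G := MonoidHom.mk' (k g) (hnorm.map_mul (haut g) (hk1 g))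
  have hdiv : ∀ x y, k y y / k x x = k (y * x) (y / x) := diag_div_diag K hsymm
  obtain ⟨Q, hQ, hQaut⟩ := exists_isSRingAut_diag k haut fun x y => by
    rw [hdiv]; exact map_div (K (y * x)) y x
  have hQmul := hnorm.map_mul hQaut (by rw [hQ, hk1])
  have hconst (x t : G) : k (x * x * t) t = k t t := by
    have h := hdiv x (x * t)
    rw [← hQ, ← hQ, hQmul, mul_div_cancel_left, hQ, mul_div_cancel_left] at h
    rw [h, mul_right_comm]
  ext t
  obtain ⟨x, hx⟩ := exists_mul_self_eq_of_odd_card hodd (g / t)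
  obtain ⟨x', hx'⟩ := exists_mul_self_eq_of_odd_card hodd t⁻¹
  have hg := hconst x t
  have h1 := hconst x' t
  rw [hx, div_mul_cancel] at hg
  rw [hx', inv_mul_cancel, hone] at h1
  rw [hg, ← h1]

end CommGroup

theorem normal_sring_normalized_iso_is_group_aut_general {G : Type*} [Group G]
    [Fintype G] [IsCyclic G] (hodd : Odd (Fintype.card G))
    (S : Set (Set G)) (hnorm : IsNormalSRing S)
    (f : G → G) (hbij : Function.Bijective f) (hone : f 1 = 1)
    (hiso : ∀ X ∈ S, ∃ X' ∈ S, ∀ x y : G, (y * x⁻¹ ∈ X ↔ f y * (f x)⁻¹ ∈ X')) :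
    ∀ a b : G, f (a * b) = f a * f b := by
  let _ : CommGroup G := IsCyclic.commGroup
  set F := Equiv.ofBijective f hbij
  have hF : IsSRingIso S F := hiso
  have htriv := eq_refl_of_isNormalSRing (Nat.card_eq_fintype_card (α := G) ▸ hodd) hnorm
    (conjTranslate F) hF.isSRingAut_conjTranslate (conjTranslate_one hone)
    (conjTranslate_mul_comm F)
  intro a b
  simpa [htriv b, F] using apply_conjTranslate_mul F b a

/-- every normalized isomorphism of a normal S-ring over a
finite cyclic group of odd order to itself is a group automorphism of `G`. -/
theorem normal_sring_normalized_iso_is_group_aut {G : Type*} [Group G]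
    [Fintype G] [IsCyclic G] (hodd : Odd (Fintype.card G))
    (S : Set (Set G)) (hS : IsSRing S) (hnorm : IsNormalSRing S)
    (f : G → G) (hbij : Function.Bijective f) (hone : f 1 = 1)
    (hiso : ∀ X ∈ S, ∃ X' ∈ S, ∀ x y : G, (y * x⁻¹ ∈ X ↔ f y * (f x)⁻¹ ∈ X')) :
    ∀ a b : G, f (a * b) = f a * f b :=
  normal_sring_normalized_iso_is_group_aut_general hodd S hnorm f hbij hone hiso
end

section
/- Let b ≥ 1 and let G = G₁ × G₂ be a finite cyclic group with gcd(|G₁|,|G₂|) = 1. Let 1 = U₀ < U₁ < ⋯ < U_b = G₁ and 1 = W₀ < W₁ < ⋯ < W_b = G₂ be strictly increasing chains of subgroups. Define a partition 𝒮 of G as follows: the class of an element (g₁,g₂) ∈ G is X(g₁) × Y(g₂), where X(g₁) = {1} if g₁ = 1 and otherwise X(g₁) = g₁·U_{i−1} with i minimal such that g₁ ∈ U_i, and similarly Y(g₂) = {1} if g₂ = 1 and otherwise Y(g₂) = g₂·W_{j−1} with j minimal such that g₂ ∈ W_j. Then every subgroup H of G that is a union of classes of 𝒮 has the form H = U ×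 W, where U_{i−1} ≤ U ≤ U_i and W_{j−1} ≤ W ≤ W_j for some indices 1 ≤ i,j ≤ b. -/
/-- The class of an element `g` in the partition determined by a chain of
subgroups `U 0 ≤ U 1 ≤ ⋯`: it is `{1}` if `g = 1`, and otherwise the coset
`g · U (i-1)`, where `i` is minimal with `g ∈ U i`. -/
def chainClass {G : Type*} [Group G] (U : ℕ → Subgroup G) (g : G) : Set G :=
  {h : G | (g = 1 ∧ h = 1) ∨
    (g ≠ 1 ∧ ∃ u ∈ U (sInf {i : ℕ | g ∈ U i} - 1), h = g * u)}

/-- The basic-set partition of the tensor product of the two iterated wreath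
products of group rings determined by the chains `U` and `W`: the class of
`(g₁, g₂)` is `chainClass U g₁ ×ˢ chainClass W g₂`. -/
def chainPartition {G₁ G₂ : Type*} [Group G₁] [Group G₂]
    (U : ℕ → Subgroup G₁) (W : ℕ → Subgroup G₂) : Set (Set (G₁ × G₂)) :=
  {C : Set (G₁ × G₂) | ∃ g : G₁ × G₂, C = chainClass U g.1 ×ˢ chainClass W g.2}

section Aux
variable {G : Type*} [Group G]

lemma chainClass_self (U : ℕ → Subgroup G) (g : G) : g ∈ chainClass U g := by
  by_cases h : g = 1
  · exact Or.inl ⟨h, h⟩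
  · exact Or.inr ⟨h, 1, (U _).one_mem, (mul_one g).symm⟩

lemma chain_mono {b : ℕ} {U : ℕ → Subgroup G} (hUb : ∀ i, b ≤ i → U i = ⊤)
    (hUchain : ∀ i < b, U i < U (i + 1)) : Monotone U := by
  apply monotone_nat_of_le_succ
  intro n
  by_cases h : n < b
  · exact (hUchain n h).le
  · rw [hUb n (le_of_not_gt h), hUb (n + 1) (by omega)]

lemma chain_sInf_eq {b : ℕ} {U : ℕ → Subgroup G}
    (hUb : ∀ i, b ≤ i → U i = ⊤) (hUchain : ∀ i < b, U i < U (i + 1))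
    {g : G} {i : ℕ} (hi : g ∈ U i) (hi' : g ∉ U (i - 1)) (hi1 : 1 ≤ i) :
    sInf {k : ℕ | g ∈ U k} = i := by
  have hmono := chain_mono hUb hUchain
  have h1 : sInf {k : ℕ | g ∈ U k} ≤ i := Nat.sInf_le hi
  have h2 : sInf {k : ℕ | g ∈ U k} ∈ {k : ℕ | g ∈ U k} :=
    Nat.sInf_mem (⟨i, hi⟩ : {k : ℕ | g ∈ U k}.Nonempty)
  by_contra hne
  exact hi' (hmono (by omega) h2)

lemma chainClass_eq {b : ℕ} {U : ℕ → Subgroup G}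
    (hU0 : U 0 = ⊥) (hUb : ∀ i, b ≤ i → U i = ⊤)
    (hUchain : ∀ i < b, U i < U (i + 1))
    {g h : G} (hh : h ∈ chainClass U g) : chainClass U h = chainClass U g := by
  have hmono := chain_mono hUb hUchain
  rcases hh with ⟨hg1, hh1⟩ | ⟨hg1, u, hu, hhu⟩
  · rw [hh1, hg1]
  · set i := sInf {k : ℕ | g ∈ U k} with hidef
    have hne : {k : ℕ | g ∈ U k}.Nonempty := ⟨b, by simp [hUb b le_rfl]⟩
    have hgi : g ∈ U i := Nat.sInf_mem hne
    have hi0 : i ≠ 0 := by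
      intro h0
      apply hg1
      have := hgi
      rw [h0, hU0] at this
      exact this
    have hgi' : g ∉ U (i - 1) :=
      Nat.notMem_of_lt_sInf (show i - 1 < sInf {k : ℕ | g ∈ U k} by omega)
    have hh1 : h ≠ 1 := by
      intro h1
      apply hgi'
      have : g = u⁻¹ := by rw [h1] at hhu; exact eq_inv_of_mul_eq_one_left hhu.symm
      rw [this]; exact (U _).inv_mem hu
    have hhi : h ∈ U i := by
      rw [hhu]; exact (U i).mul_mem hgi (hmono (by omega) hu)
    have hhi' : h ∉ U (i - 1) := by
      intro hmem
      apply hgi'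
      have : g = h * u⁻¹ := by rw [hhu]; group
      rw [this]; exact (U _).mul_mem hmem ((U _).inv_mem hu)
    have hsinf : sInf {k : ℕ | h ∈ U k} = i :=
      chain_sInf_eq hUb hUchain hhi hhi' (by omega)
    ext x
    simp only [chainClass, Set.mem_setOf_eq, hsinf, ← hidef]
    constructor
    · rintro (⟨h1, _⟩ | ⟨_, v, hv, hx⟩)
      · exact absurd h1 hh1
      · exact Or.inr ⟨hg1, u * v, (U _).mul_mem hu hv, by rw [hx, hhu, mul_assoc]⟩
    · rintro (⟨h1, _⟩ | ⟨_, v, hv, hx⟩)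
      · exact absurd h1 hg1
      · refine Or.inr ⟨hh1, u⁻¹ * v, (U _).mul_mem ((U _).inv_mem hu) hv, ?_⟩
        rw [hx, hhu]; group

lemma chain_interval {b : ℕ} (hb : 1 ≤ b) {U : ℕ → Subgroup G}
    (hU0 : U 0 = ⊥) (hUb : ∀ i, b ≤ i → U i = ⊤)
    (hUchain : ∀ i < b, U i < U (i + 1))
    (Usub : Subgroup G)
    (hkey : ∀ g ∈ Usub, g ≠ 1 → ∀ u ∈ U (sInf {k : ℕ | g ∈ U k} - 1), g * u ∈ Usub) :
    ∃ i, 1 ≤ i ∧ i ≤ b ∧ U (i - 1) ≤ Usub ∧ Usub ≤ U i := by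
  have hmono := chain_mono hUb hUchain
  by_cases hbot : Usub = ⊥
  · exact ⟨1, le_rfl, hb, by rw [hU0, hbot], by rw [hbot]; exact bot_le⟩
  · set i := sInf {k : ℕ | Usub ≤ U k} with hidef
    have hne : {k : ℕ | Usub ≤ U k}.Nonempty := ⟨b, by simp [hUb b le_rfl]⟩
    have hle : Usub ≤ U i := Nat.sInf_mem hne
    have hib : i ≤ b := Nat.sInf_le (by simp [hUb b le_rfl])
    have hi0 : i ≠ 0 := by
      intro h0
      apply hbot
      rw [h0, hU0] at hle
      exact le_bot_iff.mp hle
    have hnle : ¬ Usub ≤ U (i - 1) :=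
      Nat.notMem_of_lt_sInf (show i - 1 < sInf {k : ℕ | Usub ≤ U k} by omega)
    obtain ⟨g, hgU, hgn⟩ := SetLike.not_le_iff_exists.mp hnle
    have hg1 : g ≠ 1 := fun h => hgn (h ▸ (U _).one_mem)
    have hsinf : sInf {k : ℕ | g ∈ U k} = i :=
      chain_sInf_eq hUb hUchain (hle hgU) hgn (by omega)
    refine ⟨i, by omega, hib, ?_, hle⟩
    intro u hu
    have := hkey g hgU hg1 u (by rw [hsinf]; exact hu)
    have : u = g⁻¹ * (g * u) := by group
    rw [this]
    exact Usub.mul_mem (Usub.inv_mem hgU) (hkey g hgU hg1 u (by rw [hsinf]; exact hu))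

end Aux

lemma mem_inl_of_mem {G₁ G₂ : Type*} [Group G₁] [Group G₂] [Fintype G₁] [Fintype G₂]
    (hco : Nat.Coprime (Fintype.card G₁) (Fintype.card G₂))
    (H : Subgroup (G₁ × G₂)) {g : G₁ × G₂} (hg : g ∈ H) : ((g.1, 1) : G₁ × G₂) ∈ H := by
  obtain ⟨n, hn1, hn2⟩ := Nat.chineseRemainder hco 1 0
  have h1 : g.1 ^ n = g.1 := by
    have : n ≡ 1 [MOD orderOf g.1] := hn1.of_dvd orderOf_dvd_card
    calc g.1 ^ n = g.1 ^ 1 := pow_eq_pow_iff_modEq.mpr this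
    _ = g.1 := pow_one _
  have h2 : g.2 ^ n = 1 := by
    apply orderOf_dvd_iff_pow_eq_one.mp
    exact dvd_trans orderOf_dvd_card ((Nat.modEq_zero_iff_dvd).mp hn2)
  have := H.pow_mem hg n
  have heq : g ^ n = (g.1, 1) := by
    ext <;> simp [h1, h2]
  rwa [heq] at this

/-- for the S-ring over a finite cyclic group `G = G₁ × G₂`
(with `gcd(|G₁|,|G₂|) = 1`) that is the tensor product of two iterated wreath
products of group rings along the chains `U` and `W`, every `S`-subgroup is of
the form `Usub × Wsub` with `U (i-1) ≤ Usub ≤ U i` and `W (j-1) ≤ Wsub ≤ W j`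
for some `1 ≤ i, j ≤ b`. -/
theorem chain_sring_subgroups {G₁ G₂ : Type*} [Group G₁] [Group G₂]
    [Fintype G₁] [Fintype G₂]
    (hcyc : IsCyclic (G₁ × G₂))
    (hco : Nat.Coprime (Fintype.card G₁) (Fintype.card G₂))
    (b : ℕ) (hb : 1 ≤ b)
    (U : ℕ → Subgroup G₁) (W : ℕ → Subgroup G₂)
    (hU0 : U 0 = ⊥) (hUb : ∀ i, b ≤ i → U i = ⊤)
    (hUchain : ∀ i < b, U i < U (i + 1))
    (hW0 : W 0 = ⊥) (hWb : ∀ i, b ≤ i → W i = ⊤)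
    (hWchain : ∀ i < b, W i < W (i + 1))
    (H : Subgroup (G₁ × G₂))
    (hH : IsSSet (chainPartition U W) (H : Set (G₁ × G₂))) :
    ∃ i j : ℕ, 1 ≤ i ∧ i ≤ b ∧ 1 ≤ j ∧ j ≤ b ∧
      ∃ (Usub : Subgroup G₁) (Wsub : Subgroup G₂),
        U (i - 1) ≤ Usub ∧ Usub ≤ U i ∧
        W (j - 1) ≤ Wsub ∧ Wsub ≤ W j ∧
        H = Usub.prod Wsub := by
  classical
  -- every class of a member of H is contained in H
  have key : ∀ g ∈ H, chainClass U g.1 ×ˢ chainClass W g.2 ⊆ (H : Set (G₁ × G₂)) := by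
    obtain ⟨T, hT, heq⟩ := hH
    intro g hg
    have hg' : g ∈ ⋃₀ T := by rw [← heq]; exact hg
    obtain ⟨C, hCT, hgC⟩ := hg'
    obtain ⟨g', hC⟩ := hT hCT
    rw [hC] at hgC
    have h1 : chainClass U g.1 = chainClass U g'.1 :=
      chainClass_eq hU0 hUb hUchain hgC.1
    have h2 : chainClass W g.2 = chainClass W g'.2 :=
      chainClass_eq hW0 hWb hWchain hgC.2
    rw [h1, h2, ← hC, heq]
    exact Set.subset_sUnion_of_mem hCT
  set Usub := Subgroup.comap (MonoidHom.inl G₁ G₂) H with hUs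
  set Wsub := Subgroup.comap (MonoidHom.inr G₁ G₂) H with hWs
  have hUmem : ∀ x : G₁, x ∈ Usub ↔ ((x, 1) : G₁ × G₂) ∈ H := by
    intro x; simp [hUs, Subgroup.mem_comap]
  have hWmem : ∀ y : G₂, y ∈ Wsub ↔ ((1, y) : G₁ × G₂) ∈ H := by
    intro y; simp [hWs, Subgroup.mem_comap]
  obtain ⟨i, hi1, hib, hiL, hiR⟩ := chain_interval hb hU0 hUb hUchain Usub (by
    intro g hg hg1 u hu
    rw [hUmem] at hg ⊢
    exact key (g, 1) hg ⟨Or.inr ⟨hg1, u, hu, rfl⟩, Or.inl ⟨rfl, rfl⟩⟩)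
  obtain ⟨j, hj1, hjb, hjL, hjR⟩ := chain_interval hb hW0 hWb hWchain Wsub (by
    intro g hg hg1 u hu
    rw [hWmem] at hg ⊢
    exact key (1, g) hg ⟨Or.inl ⟨rfl, rfl⟩, Or.inr ⟨hg1, u, hu, rfl⟩⟩)
  refine ⟨i, j, hi1, hib, hj1, hjb, Usub, Wsub, hiL, hiR, hjL, hjR, ?_⟩
  ext ⟨x, y⟩
  rw [Subgroup.mem_prod, hUmem, hWmem]
  constructor
  · intro hxy
    have hx : ((x, 1) : G₁ × G₂) ∈ H := mem_inl_of_mem hco H hxy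
    refine ⟨hx, ?_⟩
    have : ((1, y) : G₁ × G₂) = (x, 1)⁻¹ * (x, y) := by
      ext <;> simp
    rw [this]
    exact H.mul_mem (H.inv_mem hx) hxy
  · rintro ⟨hx, hy⟩
    have : ((x, y) : G₁ × G₂) = (x, 1) * (1, y) := by ext <;> simp
    rw [this]
    exact H.mul_mem hx hy
end

section
/- Let b ≥ 1 and let G = G₁ × G₂ be a finite cyclic group with gcd(|G₁|,|G₂|) = 1, with strictly increasing chains of subgroups 1 = U₀ < U₁ < ⋯ < U_b = G₁ and 1 = W₀ < W₁ < ⋯ < W_b = G₂, and let 𝒮 be the partition of G whose class containing (g₁,g₂) is X(g₁) × Y(g₂), where X(g₁) = {1} if g₁ = 1 and X(g₁) = g₁·U_{i−1} with i minimal such that g₁ ∈ U_i otherwise, and Y(g₂) is defined analogously. For each class C ∈ 𝒮 let r_C = {(x,y) ∈ G×G : y·x⁻¹ ∈ C}. Then the partition {r_C : C ∈ 𝒮} of G×G is a scheme on G, and this scheme is binary: for every m ≥ 1 and all tuples x, y ∈ G^m such that for all 1 ≤ i,j ≤ m the elements x_j·x_i⁻¹ and y_j·y_i⁻¹ lie in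 the same class of 𝒮, there exists a bijection f : G → G satisfying f(x_i) = y_i for all i and such that for all u,v ∈ G, v·u⁻¹ and f(v)·f(u)⁻¹ lie in the same class of 𝒮. -/
/-- The Cayley scheme associated with a partition `S` of a group `G`: the
relation attached to a class `C` is `{(x,y) : y·x⁻¹ ∈ C}`. -/
def cayleyScheme {G : Type*} [Group G] (S : Set (Set G)) : Set (Set (G × G)) :=
  {r : Set (G × G) | ∃ C ∈ S, r = {p : G × G | p.2 * p.1⁻¹ ∈ C}}

namespace ChainAux

variable {H : Type*} [Group H] {U : ℕ → Subgroup H}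

/-- the minimal level of `g` in the chain `U`. -/
noncomputable def nu (U : ℕ → Subgroup H) (g : H) : ℕ := sInf {i : ℕ | g ∈ U i}

lemma mem_chainClass_iff {g h : H} :
    h ∈ chainClass U g ↔ (g = 1 ∧ h = 1) ∨ (g ≠ 1 ∧ ∃ u ∈ U (nu U g - 1), h = g * u) :=
  Iff.rfl

lemma nu_mem (htop : ∀ g : H, ∃ n, g ∈ U n) (g : H) : g ∈ U (nu U g) := by
  have h : nu U g ∈ {i : ℕ | g ∈ U i} := by obtain ⟨n, hn⟩ := htop g; exact Nat.sInf_mem ⟨n, hn⟩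
  exact h

lemma nu_le_iff (hmono : Monotone U) (htop : ∀ g : H, ∃ n, g ∈ U n) {g : H} {i : ℕ} :
    nu U g ≤ i ↔ g ∈ U i :=
  ⟨fun h => hmono h (nu_mem htop g), fun h => Nat.sInf_le h⟩

lemma nu_eq_zero_iff (hU0 : U 0 = ⊥) (hmono : Monotone U) (htop : ∀ g : H, ∃ n, g ∈ U n)
    {g : H} : nu U g = 0 ↔ g = 1 := by
  rw [← Nat.le_zero, nu_le_iff hmono htop, hU0, Subgroup.mem_bot]

lemma one_le_nu (hU0 : U 0 = ⊥) (hmono : Monotone U) (htop : ∀ g : H, ∃ n, g ∈ U n)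
    {g : H} (hg : g ≠ 1) : 1 ≤ nu U g := by
  rcases Nat.eq_zero_or_pos (nu U g) with h | h
  · exact absurd ((nu_eq_zero_iff hU0 hmono htop).1 h) hg
  · exact h

lemma notMem_pred (hU0 : U 0 = ⊥) (hmono : Monotone U) (htop : ∀ g : H, ∃ n, g ∈ U n)
    {g : H} (hg : g ≠ 1) : g ∉ U (nu U g - 1) := by
  intro h
  have h1 := (nu_le_iff hmono htop).2 h
  have h2 := one_le_nu hU0 hmono htop hg
  omega

lemma chainClass_one : chainClass U (1 : H) = {1} := by
  ext h
  simp [mem_chainClass_iff]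

lemma self_mem_chainClass (g : H) : g ∈ chainClass U g := by
  rcases eq_or_ne g 1 with rfl | hg
  · exact Or.inl ⟨rfl, rfl⟩
  · exact Or.inr ⟨hg, 1, one_mem _, (mul_one g).symm⟩

lemma mem_chainClass_ne {g h : H} (hg : g ≠ 1) :
    h ∈ chainClass U g ↔ g⁻¹ * h ∈ U (nu U g - 1) := by
  rw [mem_chainClass_iff]
  constructor
  · rintro (⟨rfl, -⟩ | ⟨-, u, hu, rfl⟩)
    · exact absurd rfl hg
    · simpa using hu
  · intro hm
    exact Or.inr ⟨hg, g⁻¹ * h, hm, by group⟩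

lemma nu_eq_of_mem (hU0 : U 0 = ⊥) (hmono : Monotone U) (htop : ∀ g : H, ∃ n, g ∈ U n)
    {g h : H} (hg : g ≠ 1) (hm : h ∈ chainClass U g) : nu U h = nu U g ∧ h ≠ 1 := by
  rw [mem_chainClass_ne hg] at hm
  have hgP : g ∉ U (nu U g - 1) := notMem_pred hU0 hmono htop hg
  have hhP : h ∉ U (nu U g - 1) := by
    intro hh
    exact hgP (by simpa using mul_mem hh (inv_mem hm))
  have hhmem : h ∈ U (nu U g) := by
    have h1 : g⁻¹ * h ∈ U (nu U g) := hmono (Nat.sub_le _ _) hm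
    simpa using mul_mem (nu_mem htop g) h1
  have hle : nu U h ≤ nu U g := (nu_le_iff hmono htop).2 hhmem
  have hgt : ¬ nu U h ≤ nu U g - 1 := fun hcon => hhP ((nu_le_iff hmono htop).1 hcon)
  have h1g := one_le_nu hU0 hmono htop hg
  have hnu : nu U h = nu U g := by omega
  refine ⟨hnu, ?_⟩
  intro h1
  rw [h1, (nu_eq_zero_iff hU0 hmono htop).2 rfl] at hnu
  omega

lemma chainClass_eq_of_mem (hU0 : U 0 = ⊥) (hmono : Monotone U) (htop : ∀ g : H, ∃ n, g ∈ U n)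
    {g h : H} (hm : h ∈ chainClass U g) : chainClass U h = chainClass U g := by
  rcases eq_or_ne g 1 with rfl | hg
  · rw [chainClass_one] at hm ⊢
    rw [hm]
    exact chainClass_one
  · obtain ⟨hnu, hh⟩ := nu_eq_of_mem hU0 hmono htop hg hm
    rw [mem_chainClass_ne hg] at hm
    ext z
    rw [mem_chainClass_ne hg, mem_chainClass_ne hh, hnu]
    constructor
    · intro hz
      have := mul_mem hm hz
      simpa [mul_assoc] using this
    · intro hz
      have := mul_mem (inv_mem hm) hz
      simpa [mul_assoc] using this

lemma mem_chainClass_congr (hU0 : U 0 = ⊥) (hmono : Monotone U) (htop : ∀ g : H, ∃ n, g ∈ U n)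
    {g g' b : H} (hs : g' ∈ chainClass U g) :
    g ∈ chainClass U b ↔ g' ∈ chainClass U b := by
  constructor
  · intro h
    have h1 : chainClass U g = chainClass U b := chainClass_eq_of_mem hU0 hmono htop h
    rw [← h1]
    exact hs
  · intro h
    have h1 : chainClass U g' = chainClass U b := chainClass_eq_of_mem hU0 hmono htop h
    have h2 : chainClass U g' = chainClass U g := chainClass_eq_of_mem hU0 hmono htop hs
    rw [← h1, h2]
    exact self_mem_chainClass g

lemma nu_inv (g : H) : nu U g⁻¹ = nu U g := by
  unfold nu
  congr 1
  ext i
  simp only [Set.mem_setOf_eq, inv_mem_iff]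

lemma inv_mem_chainClass_inv (hc : ∀ a b : H, a * b = b * a) {g h : H}
    (hm : h ∈ chainClass U g) : h⁻¹ ∈ chainClass U g⁻¹ := by
  rcases eq_or_ne g 1 with rfl | hg
  · rw [chainClass_one, Set.mem_singleton_iff] at hm
    simp [hm, chainClass_one]
  · have hg' : g⁻¹ ≠ 1 := by simpa using hg
    rw [mem_chainClass_ne hg] at hm
    rw [mem_chainClass_ne hg', nu_inv]
    have h2 : (g⁻¹)⁻¹ * h⁻¹ = (g⁻¹ * h)⁻¹ := by
      rw [inv_inv, mul_inv_rev, inv_inv, hc]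
    rw [h2]
    exact inv_mem hm

/-- invariance of membership in a coset of `U c` of an element of `U (c+1)`
along chain classes. -/
lemma coset_cond_congr (hU0 : U 0 = ⊥) (hmono : Monotone U) (htop : ∀ g : H, ∃ n, g ∈ U n)
    {g g' h : H} (hs : g' ∈ chainClass U g) {c : ℕ} (hh : h ∈ U (c + 1)) :
    h⁻¹ * g ∈ U c ↔ h⁻¹ * g' ∈ U c := by
  rcases eq_or_ne g 1 with rfl | hg
  · rw [chainClass_one] at hs
    rw [hs]
  · rw [mem_chainClass_ne hg] at hs
    by_cases hnu : nu U g ≤ c + 1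
    · have hu : g⁻¹ * g' ∈ U c := hmono (by omega) hs
      have : h⁻¹ * g' = (h⁻¹ * g) * (g⁻¹ * g') := by group
      rw [this]
      exact (mul_mem_cancel_right hu).symm
    · obtain ⟨hnu', hg'⟩ := nu_eq_of_mem hU0 hmono htop hg (by
        rw [mem_chainClass_ne hg]; exact hs)
      constructor
      · intro hmem
        exfalso
        have : g ∈ U (c + 1) := by
          have := mul_mem hh (hmono (Nat.le_succ c) hmem)
          simpa using this
        exact hnu ((nu_le_iff hmono htop).2 this)
      · intro hmem
        exfalso
        have : g' ∈ U (c + 1) := by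
          have := mul_mem hh (hmono (Nat.le_succ c) hmem)
          simpa using this
        have := (nu_le_iff hmono htop).2 this
        omega

end ChainAux
namespace ChainAux

open scoped Classical

variable {H : Type*} [Group H] {U : ℕ → Subgroup H}

lemma pair_coset_ncard_le [Finite H] (hmono : Monotone U) {I J : ℕ} (hIJ : I ≤ J) (x y : H) :
    {δ : H | x⁻¹ * δ ∈ U I ∧ y⁻¹ * δ ∈ U J}.ncard
      = if x⁻¹ * y ∈ U J then Nat.card (U I) else 0 := by
  split_ifs with h
  · have hset : {δ : H | x⁻¹ * δ ∈ U I ∧ y⁻¹ * δ ∈ U J} = (fun v => x * v) '' (U I : Set H) := by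
      ext δ
      constructor
      · rintro ⟨h1, -⟩
        exact ⟨x⁻¹ * δ, h1, by group⟩
      · rintro ⟨u, hu, rfl⟩
        refine ⟨by simpa using hu, ?_⟩
        have he : y⁻¹ * (x * u) = (y⁻¹ * x) * u := by group
        have hyx : y⁻¹ * x ∈ U J := by
          have := inv_mem h
          simpa [mul_inv_rev] using this
        rw [he]
        exact mul_mem hyx (hmono hIJ hu)
    rw [hset, Set.ncard_image_of_injective _ (mul_right_injective x),
      ← Nat.card_coe_set_eq, SetLike.coe_sort_coe]
  · have hset : {δ : H | x⁻¹ * δ ∈ U I ∧ y⁻¹ * δ ∈ U J} = ∅ := by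
      rw [Set.eq_empty_iff_forall_notMem]
      rintro δ ⟨h1, h2⟩
      apply h
      have he : x⁻¹ * y = (x⁻¹ * δ) * (y⁻¹ * δ)⁻¹ := by group
      rw [he]
      exact mul_mem (hmono hIJ h1) (inv_mem h2)
    rw [hset, Set.ncard_empty]

lemma pair_coset_ncard [Finite H] (hmono : Monotone U) (I J : ℕ) (x y : H) :
    {δ : H | x⁻¹ * δ ∈ U I ∧ y⁻¹ * δ ∈ U J}.ncard
      = if x⁻¹ * y ∈ U (max I J) then Nat.card (U (min I J)) else 0 := by
  rcases le_total I J with h | h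
  · rw [max_eq_right h, min_eq_left h]
    exact pair_coset_ncard_le hmono h x y
  · have hswap : {δ : H | x⁻¹ * δ ∈ U I ∧ y⁻¹ * δ ∈ U J}
        = {δ : H | y⁻¹ * δ ∈ U J ∧ x⁻¹ * δ ∈ U I} := by
      ext δ; exact and_comm
    rw [hswap, max_eq_left h, min_eq_right h, pair_coset_ncard_le hmono h y x]
    have hcond : y⁻¹ * x ∈ U I ↔ x⁻¹ * y ∈ U I := by
      constructor
      · intro h1; simpa [mul_inv_rev] using inv_mem h1
      · intro h1; simpa [mul_inv_rev] using inv_mem h1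
    rw [if_congr hcond rfl rfl]

/-- the per-factor intersection set whose size gives the intersection numbers. -/
def MSet (U : ℕ → Subgroup H) (a b g : H) : Set H :=
  {δ : H | δ ∈ chainClass U a ∧ g * δ⁻¹ ∈ chainClass U b}

lemma MSet_eq (hc : ∀ a b : H, a * b = b * a) {a b : H} (ha : a ≠ 1) (hb : b ≠ 1) (g : H) :
    MSet U a b g
      = {δ : H | a⁻¹ * δ ∈ U (nu U a - 1) ∧ (b⁻¹ * g)⁻¹ * δ ∈ U (nu U b - 1)} := by
  ext δ
  rw [MSet, Set.mem_setOf_eq, Set.mem_setOf_eq, mem_chainClass_ne ha, mem_chainClass_ne hb]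
  have e1 : (b⁻¹ * (g * δ⁻¹))⁻¹ = δ * (g⁻¹ * b) := by group
  have e2 : (b⁻¹ * g)⁻¹ * δ = (g⁻¹ * b) * δ := by group
  rw [e2, hc (g⁻¹ * b) δ, ← e1, inv_mem_iff]

lemma MSet_ncard_congr [Finite H] (hc : ∀ a b : H, a * b = b * a) (hU0 : U 0 = ⊥)
    (hmono : Monotone U) (htop : ∀ g : H, ∃ n, g ∈ U n) (a b : H) {g g' : H}
    (hs : g' ∈ chainClass U g) : (MSet U a b g).ncard = (MSet U a b g').ncard := by
  rcases eq_or_ne a 1 with rfl | ha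
  · have : MSet U 1 b g = MSet U 1 b g' := by
      ext δ
      rw [MSet, MSet, Set.mem_setOf_eq, Set.mem_setOf_eq, chainClass_one,
        Set.mem_singleton_iff]
      constructor
      · rintro ⟨rfl, h2⟩
        refine ⟨rfl, ?_⟩
        rw [inv_one, mul_one] at h2 ⊢
        exact (mem_chainClass_congr hU0 hmono htop hs).1 h2
      · rintro ⟨rfl, h2⟩
        refine ⟨rfl, ?_⟩
        rw [inv_one, mul_one] at h2 ⊢
        exact (mem_chainClass_congr hU0 hmono htop hs).2 h2
    rw [this]
  rcases eq_or_ne b 1 with rfl | hb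
  · have h1 : ∀ z : H, MSet U a 1 z = if z ∈ chainClass U a then {z} else ∅ := by
      intro z
      ext δ
      rw [MSet, Set.mem_setOf_eq, chainClass_one, Set.mem_singleton_iff, mul_inv_eq_one]
      split_ifs with h
      · constructor
        · rintro ⟨-, rfl⟩; rfl
        · rintro rfl; exact ⟨h, rfl⟩
      · constructor
        · rintro ⟨h1, rfl⟩; exact absurd h1 h
        · intro hf; simp at hf
    have hiff := mem_chainClass_congr hU0 hmono htop hs (b := a)
    rw [h1 g, h1 g']
    split_ifs with h2 h3
    · rw [Set.ncard_singleton, Set.ncard_singleton]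
    · exact absurd (hiff.1 h2) h3
    · exact absurd (hiff.2 ‹_›) h2
    · rfl
  · have h1a : 1 ≤ nu U a := one_le_nu hU0 hmono htop ha
    have h1b : 1 ≤ nu U b := one_le_nu hU0 hmono htop hb
    set K := max (nu U a - 1) (nu U b - 1) with hK
    have hba : b * a ∈ U (K + 1) := by
      have hamem : a ∈ U (K + 1) := hmono (by omega) (nu_mem htop a)
      have hbmem : b ∈ U (K + 1) := hmono (by omega) (nu_mem htop b)
      exact mul_mem hbmem hamem
    have hcond := coset_cond_congr hU0 hmono htop hs (h := b * a) hba
    simp only [mul_inv_rev, mul_assoc] at hcond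
    rw [MSet_eq hc ha hb, MSet_eq hc ha hb,
      pair_coset_ncard hmono _ _ a (b⁻¹ * g), pair_coset_ncard hmono _ _ a (b⁻¹ * g'),
      ← hK]
    exact if_congr hcond rfl rfl

end ChainAux
namespace ChainAux

/-- index of a minimal value of a tuple of naturals (least such index). -/
noncomputable def argminF {m : ℕ} (hm : 0 < m) (f : Fin m → ℕ) : Fin m :=
  (Finset.univ.filter fun k => f k
      = Finset.univ.inf' ⟨⟨0, hm⟩, Finset.mem_univ _⟩ f).min'
    (by
      obtain ⟨i, -, hi⟩ :=
        Finset.exists_mem_eq_inf' (⟨⟨0, hm⟩, Finset.mem_univ _⟩ :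
          (Finset.univ : Finset (Fin m)).Nonempty) f
      exact ⟨i, Finset.mem_filter.2 ⟨Finset.mem_univ _, hi.symm⟩⟩)

lemma argminF_le {m : ℕ} (hm : 0 < m) (f : Fin m → ℕ) (k : Fin m) :
    f (argminF hm f) ≤ f k := by
  have h1 : argminF hm f ∈ (Finset.univ.filter fun k => f k
      = Finset.univ.inf' ⟨⟨0, hm⟩, Finset.mem_univ _⟩ f) := Finset.min'_mem _ _
  have h2 := (Finset.mem_filter.1 h1).2
  rw [h2]
  exact Finset.inf'_le _ (Finset.mem_univ k)

variable {H₀ : Type*} [Group H₀]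

lemma comm_aux (hc : ∀ a b : H₀, a * b = b * a) (a b c e : H₀) :
    (a⁻¹ * b)⁻¹ * (c⁻¹ * e) = (c * a⁻¹)⁻¹ * (e * b⁻¹) := by
  have h1 : (a⁻¹ * b)⁻¹ * (c⁻¹ * e) = b⁻¹ * (a * (c⁻¹ * e)) := by group
  have h2 : (c * a⁻¹)⁻¹ * (e * b⁻¹) = a * (c⁻¹ * (e * b⁻¹)) := by group
  rw [h1, h2, hc b⁻¹ (a * (c⁻¹ * e))]
  group

lemma comm_aux2 (hc : ∀ a b : H₀, a * b = b * a) (u v p q : H₀) :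
    (v * u⁻¹)⁻¹ * ((v * p) * (u * q)⁻¹) = q⁻¹ * p := by
  have h1 : (v * u⁻¹)⁻¹ * ((v * p) * (u * q)⁻¹) = u * (p * (q⁻¹ * u⁻¹)) := by group
  rw [h1, hc q⁻¹ u⁻¹, hc p (u⁻¹ * q⁻¹)]
  group

lemma comm_aux3 (hc : ∀ a b : H₀, a * b = b * a) (p q : H₀) :
    p * q⁻¹ = (p⁻¹ * q)⁻¹ := by
  rw [mul_inv_rev, inv_inv, hc]

variable {H : Type*} [Group H] {U : ℕ → Subgroup H}

lemma factor_binary [Finite H] (hc : ∀ a b : H, a * b = b * a) (hU0 : U 0 = ⊥)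
    (hmono : Monotone U) (htop : ∀ g : H, ∃ n, g ∈ U n) {m : ℕ} (hm : 0 < m)
    (x y : Fin m → H)
    (hxy : ∀ i j, y j * (y i)⁻¹ ∈ chainClass U (x j * (x i)⁻¹)) :
    ∃ f : Equiv.Perm H, (∀ u v : H, f v * (f u)⁻¹ ∈ chainClass U (v * u⁻¹)) ∧
      ∀ i, f (x i) = y i := by
  classical
  have hlc : ∀ a b c : H, a * (b * c) = b * (a * c) := fun a b c => by
    rw [← mul_assoc, hc a b, mul_assoc]
  set d : H → Fin m → ℕ := fun g k => nu U ((x k)⁻¹ * g) with hd_def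
  set sel : H → Fin m := fun g => argminF hm (d g) with hsel_def
  have hdle : ∀ g k, d g (sel g) ≤ d g k := fun g k => argminF_le hm (d g) k
  set t : H → H := fun g => (x (sel g))⁻¹ * y (sel g) with ht_def
  have hsel_congr : ∀ u v : H, d u = d v → sel u = sel v := by
    intro u v h
    show argminF hm (d u) = argminF hm (d v)
    rw [h]
  have hd_congr : ∀ (i : ℕ) (u v : H), u⁻¹ * v ∈ U i → (∀ k, ¬ d u k ≤ i) → d u = d v := by
    intro i u v huv hall
    funext k
    have hiff : ∀ j, (x k)⁻¹ * u ∈ U j ↔ (x k)⁻¹ * v ∈ U j := by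
      intro j
      constructor
      · intro h1
        have hduk : nu U ((x k)⁻¹ * u) ≤ j := (nu_le_iff hmono htop).2 h1
        have hallk : ¬ nu U ((x k)⁻¹ * u) ≤ i := hall k
        have hij : i ≤ j := by omega
        have he : (x k)⁻¹ * v = ((x k)⁻¹ * u) * (u⁻¹ * v) := by group
        rw [he]; exact mul_mem h1 (hmono hij huv)
      · intro h1
        by_cases hji : i ≤ j
        · have he : (x k)⁻¹ * u = ((x k)⁻¹ * v) * (u⁻¹ * v)⁻¹ := by group
          rw [he]; exact mul_mem h1 (inv_mem (hmono hji huv))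
        · exfalso
          have h2 : (x k)⁻¹ * v ∈ U i := hmono (by omega) h1
          have he : (x k)⁻¹ * u = ((x k)⁻¹ * v) * (u⁻¹ * v)⁻¹ := by group
          have h3 : (x k)⁻¹ * u ∈ U i := by rw [he]; exact mul_mem h2 (inv_mem huv)
          exact hall k ((nu_le_iff hmono htop).2 h3)
    show nu U ((x k)⁻¹ * u) = nu U ((x k)⁻¹ * v)
    unfold nu
    congr 1
    ext j
    exact hiff j
  have hT : ∀ (i : ℕ) (u v : H), u⁻¹ * v ∈ U i → (t u)⁻¹ * t v ∈ U (i - 1) := by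
    intro i u v huv
    by_cases hall : ∀ k, ¬ d u k ≤ i
    · have h1 : d u = d v := hd_congr i u v huv hall
      have h2 : sel u = sel v := hsel_congr u v h1
      show ((x (sel u))⁻¹ * y (sel u))⁻¹ * ((x (sel v))⁻¹ * y (sel v)) ∈ U (i - 1)
      rw [h2, inv_mul_cancel]
      exact one_mem _
    · push_neg at hall
      obtain ⟨k₀, hk₀⟩ := hall
      have hk₀' : (x k₀)⁻¹ * u ∈ U i := (nu_le_iff hmono htop).1 hk₀
      have hku : (x (sel u))⁻¹ * u ∈ U i := by
        have h5 : d u (sel u) ≤ i := le_trans (hdle u k₀) hk₀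
        exact (nu_le_iff hmono htop).1 h5
      have hlv : (x (sel v))⁻¹ * v ∈ U i := by
        have hk0v : d v k₀ ≤ i := by
          have he : (x k₀)⁻¹ * v = ((x k₀)⁻¹ * u) * (u⁻¹ * v) := by group
          have h4 : (x k₀)⁻¹ * v ∈ U i := by rw [he]; exact mul_mem hk₀' huv
          exact (nu_le_iff hmono htop).2 h4
        have h5 : d v (sel v) ≤ i := le_trans (hdle v k₀) hk0v
        exact (nu_le_iff hmono htop).1 h5
      have hxkl : x (sel v) * (x (sel u))⁻¹ ∈ U i := by
        have h5 : (x (sel u))⁻¹ * x (sel v)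
            = ((x (sel u))⁻¹ * u) * (u⁻¹ * v) * ((x (sel v))⁻¹ * v)⁻¹ := by group
        have h6 : (x (sel u))⁻¹ * x (sel v) ∈ U i := by
          rw [h5]; exact mul_mem (mul_mem hku huv) (inv_mem hlv)
        rw [hc (x (sel v)) (x (sel u))⁻¹]
        exact h6
      have hcls := hxy (sel u) (sel v)
      by_cases hA : x (sel v) * (x (sel u))⁻¹ = 1
      · have hxx : x (sel v) = x (sel u) := by rwa [mul_inv_eq_one] at hA
        rw [hA, chainClass_one, Set.mem_singleton_iff, mul_inv_eq_one] at hcls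
        show ((x (sel u))⁻¹ * y (sel u))⁻¹ * ((x (sel v))⁻¹ * y (sel v)) ∈ U (i - 1)
        rw [hxx, hcls, inv_mul_cancel]
        exact one_mem _
      · have hnuA : nu U (x (sel v) * (x (sel u))⁻¹) ≤ i := (nu_le_iff hmono htop).2 hxkl
        rw [mem_chainClass_ne hA] at hcls
        have hw : (x (sel v) * (x (sel u))⁻¹)⁻¹ * (y (sel v) * (y (sel u))⁻¹) ∈ U (i - 1) :=
          hmono (by omega) hcls
        have he : (t u)⁻¹ * t v
            = (x (sel v) * (x (sel u))⁻¹)⁻¹ * (y (sel v) * (y (sel u))⁻¹) :=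
          comm_aux hc (x (sel u)) (y (sel u)) (x (sel v)) (y (sel v))
        rw [he]
        exact hw
  have hinj : Function.Injective (fun g : H => g * t g) := by
    intro u v h
    have h' : u * t u = v * t v := h
    by_contra hne'
    have hi : u⁻¹ * v ∈ U (nu U (u⁻¹ * v)) := nu_mem htop _
    have h1 : (t u)⁻¹ * t v ∈ U (nu U (u⁻¹ * v) - 1) := hT _ u v hi
    have h2 : u⁻¹ * v = t u * (t v)⁻¹ := by
      have h3 : u⁻¹ * (u * t u) * (t v)⁻¹ = u⁻¹ * (v * t v) * (t v)⁻¹ := by rw [h']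
      have h4 : t u * (t v)⁻¹ = u⁻¹ * v := by
        calc t u * (t v)⁻¹ = u⁻¹ * (u * t u) * (t v)⁻¹ := by group
        _ = u⁻¹ * (v * t v) * (t v)⁻¹ := h3
        _ = u⁻¹ * v := by group
      exact h4.symm
    have h3 : ∀ V : Subgroup H, (t u)⁻¹ * t v ∈ V → u⁻¹ * v ∈ V := by
      intro V hV
      rw [h2, comm_aux3 hc (t u) (t v)]
      exact inv_mem hV
    have hne1 : u⁻¹ * v ≠ 1 := fun hone => hne' (by rwa [inv_mul_eq_one] at hone)
    have h5 := one_le_nu hU0 hmono htop hne1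
    have h6 := (nu_le_iff hmono htop).2 (h3 _ h1)
    omega
  let f : Equiv.Perm H := Equiv.ofBijective _ (Finite.injective_iff_bijective.1 hinj)
  have hf_apply : ∀ g : H, f g = g * t g := fun g => rfl
  refine ⟨f, ?_, ?_⟩
  · intro u v
    rcases eq_or_ne (v * u⁻¹) 1 with h1 | h1
    · have huv : u = v := by
        rw [mul_inv_eq_one] at h1; exact h1.symm
      subst huv
      simp only [mul_inv_cancel, chainClass_one]
      exact rfl
    · have hi : u⁻¹ * v ∈ U (nu U (v * u⁻¹)) := by
        rw [hc u⁻¹ v]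
        exact nu_mem htop _
      have hs := hT (nu U (v * u⁻¹)) u v hi
      rw [mem_chainClass_ne h1, hf_apply, hf_apply]
      have he : (v * u⁻¹)⁻¹ * ((v * t v) * (u * t u)⁻¹) = (t u)⁻¹ * t v :=
        comm_aux2 hc u v (t v) (t u)
      rw [he]
      exact hs
  · intro i
    have h0 : d (x i) i = 0 := by
      show nu U ((x i)⁻¹ * x i) = 0
      rw [inv_mul_cancel]
      exact (nu_eq_zero_iff hU0 hmono htop).2 rfl
    have hk : d (x i) (sel (x i)) = 0 := by
      have := hdle (x i) i
      omega
    have hxk : x (sel (x i)) = x i := by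
      have h7 : (x (sel (x i)))⁻¹ * x i ∈ U 0 := (nu_le_iff hmono htop).1 (le_of_eq hk)
      rw [hU0, Subgroup.mem_bot, inv_mul_eq_one] at h7
      exact h7
    have hyk : y (sel (x i)) = y i := by
      have hcl := hxy (sel (x i)) i
      rw [hxk, mul_inv_cancel, chainClass_one, Set.mem_singleton_iff, mul_inv_eq_one] at hcl
      exact hcl.symm
    rw [hf_apply]
    show x i * ((x (sel (x i)))⁻¹ * y (sel (x i))) = y i
    rw [hxk, hyk, mul_inv_cancel_left]

end ChainAux
namespace ChainAux

lemma ncard_prod' {α β : Type*} (s : Set α) (t : Set β) :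
    (s ×ˢ t).ncard = s.ncard * t.ncard := by
  rw [← Nat.card_coe_set_eq, ← Nat.card_coe_set_eq, ← Nat.card_coe_set_eq,
    ← Nat.card_prod]
  exact Nat.card_congr (Equiv.Set.prod s t)

variable {H : Type*} [Group H] {U : ℕ → Subgroup H}

lemma mem_chainClass_inv_iff (hc : ∀ a b : H, a * b = b * a) {g h : H} :
    h⁻¹ ∈ chainClass U g⁻¹ ↔ h ∈ chainClass U g :=
  ⟨fun hm => by simpa using inv_mem_chainClass_inv hc hm, inv_mem_chainClass_inv hc⟩

lemma conv_iff (hc : ∀ a b : H, a * b = b * a) (α β g : H) :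
    β * α⁻¹ ∈ chainClass U g⁻¹ ↔ α * β⁻¹ ∈ chainClass U g := by
  rw [show β * α⁻¹ = (α * β⁻¹)⁻¹ by group]
  exact mem_chainClass_inv_iff hc

lemma count_eq {G : Type*} [Group G] (C D : Set G) (α β : G) :
    {γ : G | γ * α⁻¹ ∈ C ∧ β * γ⁻¹ ∈ D}.ncard
      = {δ : G | δ ∈ C ∧ (β * α⁻¹) * δ⁻¹ ∈ D}.ncard := by
  have him : {γ : G | γ * α⁻¹ ∈ C ∧ β * γ⁻¹ ∈ D}
      = (fun δ => δ * α) '' {δ | δ ∈ C ∧ (β * α⁻¹) * δ⁻¹ ∈ D} := by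
    ext γ
    constructor
    · rintro ⟨h1, h2⟩
      refine ⟨γ * α⁻¹, ⟨h1, ?_⟩, by group⟩
      rw [show (β * α⁻¹) * (γ * α⁻¹)⁻¹ = β * γ⁻¹ by group]
      exact h2
    · rintro ⟨δ, ⟨h1, h2⟩, rfl⟩
      refine ⟨by simpa using h1, ?_⟩
      rw [show β * (δ * α)⁻¹ = (β * α⁻¹) * δ⁻¹ by group]
      exact h2
  rw [him, Set.ncard_image_of_injective _ (mul_left_injective α)]

end ChainAux

open ChainAux in
/-- the Cayley scheme of the S-ring over a finite cyclic group
`G = G₁ × G₂` (with `gcd(|G₁|,|G₂|) = 1`) that is the tensor product of two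
iterated wreath products of group rings along the chains `U` and `W` is a
scheme, and this scheme is binary. -/
theorem chain_sring_scheme_is_binary {G₁ G₂ : Type*} [Group G₁] [Group G₂]
    [Fintype G₁] [Fintype G₂]
    (hcyc : IsCyclic (G₁ × G₂))
    (hco : Nat.Coprime (Fintype.card G₁) (Fintype.card G₂))
    (b : ℕ) (hb : 1 ≤ b)
    (U : ℕ → Subgroup G₁) (W : ℕ → Subgroup G₂)
    (hU0 : U 0 = ⊥) (hUb : ∀ i, b ≤ i → U i = ⊤)
    (hUchain : ∀ i < b, U i < U (i + 1))
    (hW0 : W 0 = ⊥) (hWb : ∀ i, b ≤ i → W i = ⊤)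
    (hWchain : ∀ i < b, W i < W (i + 1)) :
    IsScheme (cayleyScheme (chainPartition U W)) ∧
    IsBinary (cayleyScheme (chainPartition U W)) := by
  classical
  haveI : IsCyclic G₁ := isCyclic_of_surjective (MonoidHom.fst G₁ G₂) (fun a => ⟨(a, 1), rfl⟩)
  haveI : IsCyclic G₂ := isCyclic_of_surjective (MonoidHom.snd G₁ G₂) (fun a => ⟨(1, a), rfl⟩)
  have hc1 : ∀ a b : G₁, a * b = b * a := fun a b => by
    letI : CommGroup G₁ := IsCyclic.commGroup
    exact mul_comm a b
  have hc2 : ∀ a b : G₂, a * b = b * a := fun a b => by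
    letI : CommGroup G₂ := IsCyclic.commGroup
    exact mul_comm a b
  have hmU : Monotone U := monotone_nat_of_le_succ (by
    intro i
    by_cases h : i < b
    · exact le_of_lt (hUchain i h)
    · rw [hUb (i + 1) (by omega)]; exact le_top)
  have hmW : Monotone W := monotone_nat_of_le_succ (by
    intro i
    by_cases h : i < b
    · exact le_of_lt (hWchain i h)
    · rw [hWb (i + 1) (by omega)]; exact le_top)
  have htU : ∀ g : G₁, ∃ n, g ∈ U n := fun g => ⟨b, by rw [hUb b le_rfl]; trivial⟩
  have htW : ∀ g : G₂, ∃ n, g ∈ W n := fun g => ⟨b, by rw [hWb b le_rfl]; trivial⟩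
  -- the global class map and its basic properties
  have hself : ∀ g : G₁ × G₂, g ∈ chainClass U g.1 ×ˢ chainClass W g.2 :=
    fun g => ⟨self_mem_chainClass _, self_mem_chainClass _⟩
  have hclEq : ∀ {g p : G₁ × G₂}, p ∈ chainClass U g.1 ×ˢ chainClass W g.2 →
      chainClass U p.1 ×ˢ chainClass W p.2 = chainClass U g.1 ×ˢ chainClass W g.2 := by
    intro g p hp
    obtain ⟨h1, h2⟩ := hp
    rw [chainClass_eq_of_mem hU0 hmU htU h1, chainClass_eq_of_mem hW0 hmW htW h2]
  refine ⟨⟨⟨?_, ?_⟩, ?_, ?_, ?_⟩, ?_⟩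
  -- ∅ is not a relation
  · rintro ⟨C, ⟨g, rfl⟩, hC⟩
    have h1 : ((1, g) : (G₁ × G₂) × (G₁ × G₂)) ∈ {p : (G₁ × G₂) × (G₁ × G₂) |
        p.2 * p.1⁻¹ ∈ chainClass U g.1 ×ˢ chainClass W g.2} := by
      show g * (1 : G₁ × G₂)⁻¹ ∈ chainClass U g.1 ×ˢ chainClass W g.2
      rw [inv_one, mul_one]
      exact hself g
    rw [← hC] at h1
    exact h1
  -- each pair lies in a unique relation
  · intro p
    refine ⟨{q : (G₁ × G₂) × (G₁ × G₂) |
        q.2 * q.1⁻¹ ∈ chainClass U (p.2 * p.1⁻¹).1 ×ˢ chainClass W (p.2 * p.1⁻¹).2},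
      ⟨⟨_, ⟨p.2 * p.1⁻¹, rfl⟩, rfl⟩, hself _⟩, ?_⟩
    rintro s ⟨⟨C, ⟨g, rfl⟩, rfl⟩, hp⟩
    have h1 := hclEq hp
    rw [← h1]
  -- the diagonal is a relation
  · refine ⟨chainClass U (1 : G₁) ×ˢ chainClass W (1 : G₂), ⟨(1, 1), rfl⟩, ?_⟩
    ext p
    simp only [Set.mem_setOf_eq, chainClass_one, Set.mem_prod, Set.mem_singleton_iff,
      Prod.fst_mul, Prod.snd_mul, Prod.fst_inv, Prod.snd_inv, mul_inv_eq_one, Prod.ext_iff]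
    exact ⟨fun h => ⟨h.1.symm, h.2.symm⟩, fun h => ⟨h.1.symm, h.2.symm⟩⟩
  -- converses of relations are relations
  · rintro s ⟨C, ⟨g, rfl⟩, rfl⟩
    refine ⟨chainClass U g.1⁻¹ ×ˢ chainClass W g.2⁻¹, ⟨g⁻¹, rfl⟩, ?_⟩
    ext p
    simp only [Set.mem_setOf_eq, Set.mem_prod, Prod.fst_mul, Prod.snd_mul, Prod.fst_inv,
      Prod.snd_inv]
    constructor
    · rintro ⟨h1, h2⟩
      exact ⟨(conv_iff hc1 _ _ _).2 h1, (conv_iff hc2 _ _ _).2 h2⟩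
    · rintro ⟨h1, h2⟩
      exact ⟨(conv_iff hc1 _ _ _).1 h1, (conv_iff hc2 _ _ _).1 h2⟩
  -- intersection numbers
  · rintro r ⟨C, ⟨a, rfl⟩, rfl⟩ s ⟨D, ⟨e, rfl⟩, rfl⟩ tt ⟨E, ⟨c, rfl⟩, rfl⟩ p hp q hq
    have hsplit : ∀ z : G₁ × G₂,
        {δ : G₁ × G₂ | δ ∈ chainClass U a.1 ×ˢ chainClass W a.2 ∧
            z * δ⁻¹ ∈ chainClass U e.1 ×ˢ chainClass W e.2}
          = MSet U a.1 e.1 z.1 ×ˢ MSet W a.2 e.2 z.2 := by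
      intro z
      ext δ
      simp only [Set.mem_setOf_eq, Set.mem_prod, Prod.fst_mul, Prod.snd_mul, Prod.fst_inv,
        Prod.snd_inv, MSet]
      tauto
    have hstep : ∀ z : (G₁ × G₂) × (G₁ × G₂),
        {γ : G₁ × G₂ | (z.1, γ) ∈ {w : (G₁ × G₂) × (G₁ × G₂) |
              w.2 * w.1⁻¹ ∈ chainClass U a.1 ×ˢ chainClass W a.2} ∧
            (γ, z.2) ∈ {w : (G₁ × G₂) × (G₁ × G₂) |
              w.2 * w.1⁻¹ ∈ chainClass U e.1 ×ˢ chainClass W e.2}}.ncard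
          = (MSet U a.1 e.1 (z.2 * z.1⁻¹).1).ncard * (MSet W a.2 e.2 (z.2 * z.1⁻¹).2).ncard := by
      intro z
      rw [show {γ : G₁ × G₂ | (z.1, γ) ∈ {w : (G₁ × G₂) × (G₁ × G₂) |
              w.2 * w.1⁻¹ ∈ chainClass U a.1 ×ˢ chainClass W a.2} ∧
            (γ, z.2) ∈ {w : (G₁ × G₂) × (G₁ × G₂) |
              w.2 * w.1⁻¹ ∈ chainClass U e.1 ×ˢ chainClass W e.2}}
          = {γ : G₁ × G₂ | γ * z.1⁻¹ ∈ chainClass U a.1 ×ˢ chainClass W a.2 ∧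
              z.2 * γ⁻¹ ∈ chainClass U e.1 ×ˢ chainClass W e.2} from rfl,
        count_eq (chainClass U a.1 ×ˢ chainClass W a.2)
          (chainClass U e.1 ×ˢ chainClass W e.2) z.1 z.2, hsplit, ncard_prod']
    rw [hstep p, hstep q]
    have hqp : q.2 * q.1⁻¹ ∈ chainClass U (p.2 * p.1⁻¹).1 ×ˢ chainClass W (p.2 * p.1⁻¹).2 := by
      rw [hclEq hp]
      exact hq
    rw [MSet_ncard_congr hc1 hU0 hmU htU a.1 e.1 hqp.1,
      MSet_ncard_congr hc2 hW0 hmW htW a.2 e.2 hqp.2]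
  -- binary
  · intro m hm x y hrel
    have hxy : ∀ i j, y j * (y i)⁻¹ ∈
        chainClass U (x j * (x i)⁻¹).1 ×ˢ chainClass W (x j * (x i)⁻¹).2 := by
      intro i j
      exact (hrel i j {w : (G₁ × G₂) × (G₁ × G₂) | w.2 * w.1⁻¹ ∈
          chainClass U (x j * (x i)⁻¹).1 ×ˢ chainClass W (x j * (x i)⁻¹).2}
        ⟨_, ⟨x j * (x i)⁻¹, rfl⟩, rfl⟩).1 (hself _)
    have hxy1 : ∀ i j, (y j).1 * ((y i).1)⁻¹ ∈
        chainClass U ((x j).1 * ((x i).1)⁻¹) := fun i j => (hxy i j).1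
    have hxy2 : ∀ i j, (y j).2 * ((y i).2)⁻¹ ∈
        chainClass W ((x j).2 * ((x i).2)⁻¹) := fun i j => (hxy i j).2
    obtain ⟨f₁, hf₁, hfx₁⟩ := factor_binary hc1 hU0 hmU htU hm
      (fun k => (x k).1) (fun k => (y k).1) hxy1
    obtain ⟨f₂, hf₂, hfx₂⟩ := factor_binary hc2 hW0 hmW htW hm
      (fun k => (x k).2) (fun k => (y k).2) hxy2
    refine ⟨Equiv.prodCongr f₁ f₂, ?_, ?_⟩
    · rintro s ⟨C, ⟨g, rfl⟩, rfl⟩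
      ext q
      constructor
      · rintro ⟨p, hp, rfl⟩
        have h1 : f₁ p.2.1 * (f₁ p.1.1)⁻¹ ∈ chainClass U (p.2.1 * p.1.1⁻¹) := hf₁ _ _
        have h2 : f₂ p.2.2 * (f₂ p.1.2)⁻¹ ∈ chainClass W (p.2.2 * p.1.2⁻¹) := hf₂ _ _
        show (Equiv.prodCongr f₁ f₂) p.2 * ((Equiv.prodCongr f₁ f₂) p.1)⁻¹ ∈
          chainClass U g.1 ×ˢ chainClass W g.2
        have hEq := hclEq hp
        rw [← hEq]
        exact ⟨h1, h2⟩
      · intro hq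
        refine ⟨((Equiv.prodCongr f₁ f₂).symm q.1, (Equiv.prodCongr f₁ f₂).symm q.2), ?_, ?_⟩
        · set p1 := (Equiv.prodCongr f₁ f₂).symm q.1 with hp1
          set p2 := (Equiv.prodCongr f₁ f₂).symm q.2 with hp2
          show p2 * p1⁻¹ ∈ chainClass U g.1 ×ˢ chainClass W g.2
          have hq1 : (Equiv.prodCongr f₁ f₂) p1 = q.1 := Equiv.apply_symm_apply _ _
          have hq2 : (Equiv.prodCongr f₁ f₂) p2 = q.2 := Equiv.apply_symm_apply _ _
          have h1 : f₁ p2.1 * (f₁ p1.1)⁻¹ ∈ chainClass U (p2.1 * p1.1⁻¹) := hf₁ _ _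
          have h2 : f₂ p2.2 * (f₂ p1.2)⁻¹ ∈ chainClass W (p2.2 * p1.2⁻¹) := hf₂ _ _
          have hmem : q.2 * q.1⁻¹ ∈
              chainClass U (p2 * p1⁻¹).1 ×ˢ chainClass W (p2 * p1⁻¹).2 := by
            rw [← hq1, ← hq2]
            exact ⟨h1, h2⟩
          have hEq3 : chainClass U (p2 * p1⁻¹).1 ×ˢ chainClass W (p2 * p1⁻¹).2
              = chainClass U g.1 ×ˢ chainClass W g.2 := (hclEq hmem).symm.trans (hclEq hq)
          rw [← hEq3]
          exact hself _
        · show ((Equiv.prodCongr f₁ f₂) _, (Equiv.prodCongr f₁ f₂) _) = q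
          rw [Equiv.apply_symm_apply, Equiv.apply_symm_apply]
    · intro i
      exact Prod.ext (hfx₁ i) (hfx₂ i)
end

section
/- Every finite connected vertex-transitive cubic simple graph is 3-connected: if G is a finite connected simple graph on vertex set V in which every vertex has degree exactly 3 and such that for all u,v ∈ V there exists a graph automorphism of G mapping u to v, then for every set A ⊆ V with |A| ≤ 2, the subgraph of G induced on V ∖ A is connected. -/
/-!
A fragment with separator `S` is a nonempty set `C` of vertices outside `S`, closed under
adjacency in `G - S` and missing some vertex of `G - S`; so `G - S` is disconnected exactly when
`S` has a fragment. If `C`, `F` are fragments with separators `S`, `T` and `D`, `E` are the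
complementary fragments, then `C ∩ F` and `D ∩ E`, when nonempty, are fragments whose separators
have at most `|S| + |T|` vertices together.

Vertex-transitivity rules out cut vertices, since a finite connected graph has a vertex that is
not one. If two vertices separate `G`, take a smallest fragment `C` (an atom) over all separators
`S` with `|S| ≤ 2`. An automorphism moving a vertex of `S` into `C` yields a separator `T` meeting
`C`, and crossing `C` with the fragments of `T` forces `C ⊆ T`. As no vertex of degree three has
all its neighbours in `S`, `C` is an edge `xy` with `N(x) = {y} ∪ S`. Moving `x` into `S` the same
way shows that the two vertices of `S` are adjacent, so a vertex of `S` has no neighbour in the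
complementary fragment and the other vertex of `S` alone would separate `G`.
-/

open SimpleGraph Set

namespace SimpleGraph

variable {V W : Type*} {G : SimpleGraph V} {H : SimpleGraph W} {S T C F : Set V}

structure IsFragment (G : SimpleGraph V) (S C : Set V) : Prop where
  nonempty : C.Nonempty
  disjoint : Disjoint C S
  adj_mem : ∀ ⦃x y⦄, x ∈ C → G.Adj x y → y ∈ C ∪ S
  nonempty_compl : (C ∪ S)ᶜ.Nonempty

namespace IsFragment

lemma compl (hC : IsFragment G S C) : IsFragment G S (C ∪ S)ᶜ where
  nonempty := hC.nonempty_compl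
  disjoint := disjoint_compl_left.mono_right subset_union_right
  adj_mem x y hx hxy := by
    by_cases hyS : y ∈ S
    · exact Or.inr hyS
    · refine Or.inl fun hy => hx (hC.adj_mem ?_ hxy.symm)
      exact hy.resolve_right hyS
  nonempty_compl := by
    obtain ⟨x, hx⟩ := hC.nonempty
    exact ⟨x, by simp [hx, Set.disjoint_left.mp hC.disjoint hx]⟩

lemma compl_union_compl (hC : IsFragment G S C) : ((C ∪ S)ᶜ ∪ S)ᶜ = C := by
  ext x
  have := fun hx : x ∈ C => Set.disjoint_left.mp hC.disjoint hx
  simp only [mem_compl_iff, mem_union]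
  tauto

lemma map (hC : IsFragment G S C) (e : G ≃g H) : IsFragment H (e '' S) (e '' C) where
  nonempty := hC.nonempty.image e
  disjoint := (disjoint_image_iff e.injective).mpr hC.disjoint
  adj_mem := by
    rintro _ y ⟨x, hx, rfl⟩ hxy
    rw [← e.apply_symm_apply y, e.map_adj_iff] at hxy
    rw [← e.apply_symm_apply y, ← image_union]
    exact mem_image_of_mem e (hC.adj_mem hx hxy)
  nonempty_compl := by
    obtain ⟨x, hx⟩ := hC.nonempty_compl
    refine ⟨e x, ?_⟩
    rwa [← image_union, mem_compl_iff, e.injective.mem_set_image]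

lemma mem_of_reachable (hC : IsFragment G S C) {u v : ↥Sᶜ} (hu : ↑u ∈ C)
    (huv : (G.induce Sᶜ).Reachable u v) : ↑v ∈ C := by
  rw [reachable_iff_reflTransGen] at huv
  induction huv with
  | refl => exact hu
  | @tail b c _ hbc hb => exact (hC.adj_mem hb hbc).resolve_right c.2

lemma not_preconnected_induce_compl (hC : IsFragment G S C) :
    ¬ (G.induce Sᶜ).Preconnected := by
  intro hpre
  obtain ⟨u, hu⟩ := hC.nonempty
  obtain ⟨v, hv⟩ := hC.nonempty_compl
  rw [mem_compl_iff, mem_union, not_or] at hv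
  exact hv.1 (hC.mem_of_reachable (u := ⟨u, Set.disjoint_left.mp hC.disjoint hu⟩)
    (v := ⟨v, hv.2⟩) hu (hpre _ _))

end IsFragment

lemma exists_isFragment_of_not_preconnected (h : ¬ (G.induce Sᶜ).Preconnected) :
    ∃ C, IsFragment G S C := by
  obtain ⟨u, v, huv⟩ : ∃ u v, ¬ (G.induce Sᶜ).Reachable u v := by
    simpa [Preconnected] using h
  refine ⟨Subtype.val '' {w | (G.induce Sᶜ).Reachable u w}, ⟨_, u, Reachable.refl _, rfl⟩,
    ?_, ?_, ⟨v, ?_⟩⟩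
  · exact Set.disjoint_left.mpr fun _ ⟨w, _, hw⟩ => hw ▸ w.2
  · rintro _ y ⟨w, hw, rfl⟩ hwy
    by_cases hy : y ∈ S
    · exact Or.inr hy
    · exact Or.inl ⟨⟨y, hy⟩, hw.trans (Adj.reachable (by simpa using hwy)), rfl⟩
  · rintro (⟨w, hw, hwv⟩ | hv)
    · exact huv (Subtype.ext hwv ▸ hw)
    · exact v.2 hv

lemma IsFragment.two_le_ncard_separator [Finite V] (hconn : G.Connected)
    (htrans : ∀ u v : V, ∃ e : G ≃g G, e u = v) (hC : IsFragment G S C) : 2 ≤ S.ncard := by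
  by_contra! hS
  rcases (ncard_le_one_iff_eq (toFinite S)).mp (Nat.le_of_lt_succ hS) with rfl | ⟨z, rfl⟩
  · apply hC.not_preconnected_induce_compl
    rw [compl_empty]
    exact G.induceUnivIso.preconnected_iff.mpr hconn.preconnected
  · obtain ⟨v, hv⟩ := hconn.exists_preconnected_induce_compl_singleton_of_finite
    obtain ⟨e, rfl⟩ := htrans v z
    have hC' := hC.map e.symm
    rw [image_singleton, RelIso.symm_apply_apply] at hC'
    exact hC'.not_preconnected_induce_compl hv

lemma IsFragment.inter (hC : IsFragment G S C) (hF : IsFragment G T F) (h : (C ∩ F).Nonempty) :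
    IsFragment G (C ∩ T ∪ S ∩ F ∪ S ∩ T) (C ∩ F) where
  nonempty := h
  disjoint := by
    refine Set.disjoint_left.mpr fun x ⟨hxC, hxF⟩ hx => ?_
    have := Set.disjoint_left.mp hC.disjoint hxC
    have := Set.disjoint_left.mp hF.disjoint hxF
    simp only [mem_union, mem_inter_iff] at hx
    tauto
  adj_mem x y hx hxy := by
    have := hC.adj_mem hx.1 hxy
    have := hF.adj_mem hx.2 hxy
    simp only [mem_union, mem_inter_iff] at *
    tauto
  nonempty_compl := by
    obtain ⟨x, hx⟩ := hF.nonempty_compl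
    refine ⟨x, ?_⟩
    simp only [mem_compl_iff, mem_union, mem_inter_iff] at *
    tauto

lemma ncard_add_ncard_crossing_separators_le [Finite V] (hCS : Disjoint C S) (hFT : Disjoint F T) :
    (C ∩ T ∪ S ∩ F ∪ S ∩ T).ncard + ((C ∪ S)ᶜ ∩ T ∪ S ∩ (F ∪ T)ᶜ ∪ S ∩ T).ncard ≤
      S.ncard + T.ncard := by
  have hC := fun x (hx : x ∈ C) => Set.disjoint_left.mp hCS hx
  have hF := fun x (hx : x ∈ F) => Set.disjoint_left.mp hFT hx
  rw [← ncard_union_add_ncard_inter, ← ncard_union_add_ncard_inter S T]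
  refine add_le_add (ncard_le_ncard fun x => ?_) (ncard_le_ncard fun x => ?_) <;>
    simp only [mem_union, mem_inter_iff, mem_compl_iff] <;> grind

lemma IsFragment.exists_adj_of_mem_separator (hsep : ∀ S C, IsFragment G S C → 2 ≤ S.ncard)
    (hC : IsFragment G S C) (hS : S.ncard ≤ 2) {a : V} (ha : a ∈ S) : ∃ c ∈ C, G.Adj a c := by
  by_contra! hna
  have hC' : IsFragment G (S \ {a}) C :=
    { nonempty := hC.nonempty
      disjoint := hC.disjoint.mono_right sdiff_subset
      adj_mem := fun x y hx hxy => (hC.adj_mem hx hxy).imp_right fun hy =>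
        ⟨hy, fun hya => hna x hx (by rw [mem_singleton_iff] at hya; exact hya ▸ hxy.symm)⟩
      nonempty_compl := hC.nonempty_compl.mono
        (compl_subset_compl.mpr (union_subset_union_right _ sdiff_subset)) }
  have := hsep _ _ hC'
  rw [ncard_sdiff_singleton_of_mem ha] at this
  omega

structure IsAtom (G : SimpleGraph V) (S C : Set V) : Prop where
  isFragment : IsFragment G S C
  ncard_separator_le : S.ncard ≤ 2
  ncard_le : ∀ ⦃T F⦄, T.ncard ≤ 2 → IsFragment G T F → C.ncard ≤ F.ncard

lemma exists_isAtom (hS : S.ncard ≤ 2) (hC : IsFragment G S C) : ∃ S C, IsAtom G S C := by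
  classical
  have h : ∃ n, ∃ S C, S.ncard ≤ 2 ∧ IsFragment G S C ∧ C.ncard = n := ⟨_, S, C, hS, hC, rfl⟩
  obtain ⟨S', C', hS', hC', hn⟩ := Nat.find_spec h
  exact ⟨S', C', hC', hS', fun T F hT hF => hn ▸ Nat.find_min' h ⟨T, F, hT, hF, rfl⟩⟩

namespace IsAtom

lemma map (hC : IsAtom G S C) (e : G ≃g H) :
    IsAtom H (e '' S) (e '' C) where
  isFragment := hC.isFragment.map e
  ncard_separator_le := (ncard_image_of_injective _ e.injective).trans_le hC.ncard_separator_le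
  ncard_le T F hT hF := by
    have := hC.ncard_le ((ncard_image_of_injective _ e.symm.injective).trans_le hT)
      (hF.map e.symm)
    rwa [ncard_image_of_injective _ e.injective, ← ncard_image_of_injective F e.symm.injective]

end IsAtom

variable [Finite V]

lemma IsFragment.two_le_ncard (hdeg : ∀ v, 3 ≤ (G.neighborSet v).ncard)
    (hC : IsFragment G S C) (hS : S.ncard ≤ 2) : 2 ≤ C.ncard := by
  by_contra! hC1
  obtain ⟨c, hc⟩ := hC.nonempty
  have hN : G.neighborSet c ⊆ S := fun y hy => (hC.adj_mem hc hy).resolve_left fun hyC =>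
    G.ne_of_adj hy ((ncard_le_one_iff (toFinite C)).mp (Nat.le_of_lt_succ hC1) hc hyC)
  have := ncard_le_ncard hN
  have := hdeg c
  omega

lemma IsFragment.neighborSet_eq_insert (hcubic : ∀ v, (G.neighborSet v).ncard = 3)
    (hC : IsFragment G S C) (hS : S.ncard ≤ 2) {x y : V} (hCxy : C = {x, y}) :
    G.neighborSet x = insert y S := by
  refine eq_of_subset_of_ncard_le (fun z hz => ?_) ?_
  · rcases hC.adj_mem (hCxy ▸ mem_insert x {y}) hz with hzC | hzS
    · rw [hCxy] at hzC
      rcases hzC with rfl | rfl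
      · exact absurd hz (G.irrefl)
      · exact mem_insert _ _
    · exact mem_insert_of_mem _ hzS
  · rw [hcubic]
    exact (ncard_insert_le y S).trans (by omega)

namespace IsAtom

lemma subset_of_ncard_le (hC : IsAtom G S C) (hF : IsFragment G T F) (hCF : (C ∩ F).Nonempty)
    (h : (C ∩ T ∪ S ∩ F ∪ S ∩ T).ncard ≤ 2) : C ⊆ F :=
  inter_eq_left.mp (eq_of_subset_of_ncard_le inter_subset_left
    (hC.ncard_le h (hC.isFragment.inter hF hCF)))

lemma subset_of_not_disjoint (hsep : ∀ S C, IsFragment G S C → 2 ≤ S.ncard)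
    (hC : IsAtom G S C) (hF : IsFragment G T F) (hT : T.ncard ≤ 2) (hCF : (C ∩ F).Nonempty)
    (hDE : ¬ Disjoint (C ∪ S)ᶜ (F ∪ T)ᶜ) : C ⊆ F := by
  refine hC.subset_of_ncard_le hF hCF ?_
  have := hsep _ _ (hC.isFragment.compl.inter hF.compl (not_disjoint_iff_nonempty_inter.mp hDE))
  have := ncard_add_ncard_crossing_separators_le hC.isFragment.disjoint hF.disjoint
  have := hC.ncard_separator_le
  omega

lemma disjoint_compl_compl (hsep : ∀ S C, IsFragment G S C → 2 ≤ S.ncard)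
    (hC : IsAtom G S C) (hF : IsFragment G T F) (hT : T.ncard ≤ 2) (hCT : (C ∩ T).Nonempty)
    (hCF : (C ∩ F).Nonempty) : Disjoint (C ∪ S)ᶜ (F ∪ T)ᶜ := by
  by_contra hDE
  obtain ⟨u, huC, huT⟩ := hCT
  exact Set.disjoint_left.mp hF.disjoint (hC.subset_of_not_disjoint hsep hF hT hCF hDE huC) huT

lemma inter_compl_nonempty (hsep : ∀ S C, IsFragment G S C → 2 ≤ S.ncard)
    (hdeg : ∀ v, 3 ≤ (G.neighborSet v).ncard)
    (hC : IsAtom G S C) (hF : IsFragment G T F) (hT : T.ncard ≤ 2) (hCT : (C ∩ T).Nonempty)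
    (hCF : (C ∩ F).Nonempty) : (C ∩ (F ∪ T)ᶜ).Nonempty := by
  by_contra hCE
  have hDE := hC.disjoint_compl_compl hsep hF hT hCT hCF
  have hES : (F ∪ T)ᶜ ⊆ S := fun x hx => by
    by_contra hxS
    by_cases hxC : x ∈ C
    · exact hCE ⟨x, hxC, hx⟩
    · exact Set.disjoint_left.mp hDE (by simp [hxC, hxS]) hx
  have hSE : (F ∪ T)ᶜ = S := eq_of_subset_of_ncard_le hES
    (hC.ncard_separator_le.trans (hF.compl.two_le_ncard hdeg hT))
  obtain ⟨u, huC, huT⟩ := hCT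
  refine Set.disjoint_left.mp hF.disjoint (hC.subset_of_ncard_le hF hCF ?_ huC) huT
  refine (ncard_le_ncard fun x hx => ?_).trans hT
  rw [← hSE] at hx
  simp only [mem_union, mem_inter_iff, mem_compl_iff] at hx
  tauto

lemma disjoint_of_nonempty_inter_separator (hsep : ∀ S C, IsFragment G S C → 2 ≤ S.ncard)
    (hdeg : ∀ v, 3 ≤ (G.neighborSet v).ncard)
    (hC : IsAtom G S C) (hF : IsFragment G T F) (hT : T.ncard ≤ 2) (hCT : (C ∩ T).Nonempty) :
    Disjoint C F := by
  rw [Set.disjoint_iff_inter_eq_empty, ← not_nonempty_iff_eq_empty]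
  intro hCF
  have hDE := hC.disjoint_compl_compl hsep hF hT hCT hCF
  have hDF := hC.disjoint_compl_compl hsep hF.compl hT hCT
    (hC.inter_compl_nonempty hsep hdeg hF hT hCT hCF)
  rw [hF.compl_union_compl] at hDF
  obtain ⟨u, huC, huT⟩ := hCT
  have hD : insert u (C ∪ S)ᶜ ⊆ T := by
    rintro x (rfl | hx)
    · exact huT
    · by_contra hxT
      by_cases hxF : x ∈ F
      · exact Set.disjoint_left.mp hDF hx hxF
      · exact Set.disjoint_left.mp hDE hx (by simp [hxF, hxT])
  have := ncard_le_ncard hD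
  rw [ncard_insert_of_notMem (by simp [huC])] at this
  have := hC.isFragment.compl.two_le_ncard hdeg hC.ncard_separator_le
  omega

lemma subset_separator (hsep : ∀ S C, IsFragment G S C → 2 ≤ S.ncard)
    (hdeg : ∀ v, 3 ≤ (G.neighborSet v).ncard)
    (hC : IsAtom G S C) (hF : IsFragment G T F) (hT : T.ncard ≤ 2) (hCT : (C ∩ T).Nonempty) :
    C ⊆ T := by
  intro x hx
  by_contra hxT
  by_cases hxF : x ∈ F
  · exact Set.disjoint_left.mp (hC.disjoint_of_nonempty_inter_separator hsep hdeg hF hT hCT) hx hxF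
  · exact Set.disjoint_left.mp (hC.disjoint_of_nonempty_inter_separator hsep hdeg hF.compl hT hCT) hx
      (by simp [hxF, hxT])

lemma ncard_eq_two (hsep : ∀ S C, IsFragment G S C → 2 ≤ S.ncard)
    (hdeg : ∀ v, 3 ≤ (G.neighborSet v).ncard) (htrans : ∀ u v : V, ∃ e : G ≃g G, e u = v)
    (hC : IsAtom G S C) : C.ncard = 2 := by
  obtain ⟨u, hu⟩ := hC.isFragment.nonempty
  obtain ⟨a, ha⟩ := nonempty_of_ncard_ne_zero (s := S) (by have := hsep _ _ hC.isFragment; omega)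
  obtain ⟨e, rfl⟩ := htrans a u
  have hT : (e '' S).ncard ≤ 2 :=
    (ncard_image_of_injective _ e.injective).trans_le hC.ncard_separator_le
  have := ncard_le_ncard (hC.subset_separator hsep hdeg (hC.isFragment.map e) hT
    ⟨e a, hu, mem_image_of_mem e ha⟩)
  have := hC.isFragment.two_le_ncard hdeg hC.ncard_separator_le
  omega

lemma false_of_degree_eq_three (hsep : ∀ S C, IsFragment G S C → 2 ≤ S.ncard)
    (hcubic : ∀ v, (G.neighborSet v).ncard = 3) (htrans : ∀ u v : V, ∃ e : G ≃g G, e u = v)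
    (hC : IsAtom G S C) : False := by
  have hdeg v : 3 ≤ (G.neighborSet v).ncard := (hcubic v).ge
  have hS := hC.ncard_separator_le
  obtain ⟨x, y, hxy, hCxy⟩ := Set.ncard_eq_two.mp (hC.ncard_eq_two hsep hdeg htrans)
  have hx : x ∈ C := hCxy ▸ mem_insert x {y}
  have hy : y ∈ C := hCxy ▸ mem_insert_of_mem x rfl
  have hNx := hC.isFragment.neighborSet_eq_insert hcubic hS hCxy
  have hNy := hC.isFragment.neighborSet_eq_insert hcubic hS (hCxy.trans (pair_comm x y))
  obtain ⟨a, ha⟩ := nonempty_of_ncard_ne_zero (s := S) (by have := hsep _ _ hC.isFragment; omega)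
  obtain ⟨f, rfl⟩ := htrans x a
  have hfy : f y ∈ S := (hC.map f).subset_separator hsep hdeg hC.isFragment hS
    ⟨f x, mem_image_of_mem f hx, ha⟩ (mem_image_of_mem f hy)
  have hfyC : f y ∉ C := Set.disjoint_right.mp hC.isFragment.disjoint hfy
  have hxfx : f x ∈ G.neighborSet x := hNx ▸ mem_insert_of_mem y ha
  have hyfx : f x ∈ G.neighborSet y := hNy ▸ mem_insert_of_mem x ha
  have hadj : y ∈ G.neighborSet x := hNx ▸ mem_insert y S
  have hfxy : G.Adj (f x) (f y) := f.map_adj_iff.mpr hadj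
  have hN : {x, y, f y} = G.neighborSet (f x) := by
    refine eq_of_subset_of_ncard_le ?_ ?_
    · rintro z (rfl | rfl | rfl)
      exacts [G.adj_symm hxfx, G.adj_symm hyfx, hfxy]
    · rw [hcubic, Set.ncard_eq_three.mpr ⟨x, y, f y, hxy, fun h => hfyC (h ▸ hx),
        fun h => hfyC (h ▸ hy), rfl⟩]
  obtain ⟨d, hd, hfxd⟩ := hC.isFragment.compl.exists_adj_of_mem_separator hsep hS ha
  rw [← mem_neighborSet, ← hN] at hfxd
  apply hd
  rcases hfxd with rfl | rfl | rfl
  · exact Or.inl hx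
  · exact Or.inl hy
  · exact Or.inr hfy

end IsAtom

lemma not_isFragment_of_ncard_le_two (hconn : G.Connected)
    (hcubic : ∀ v, (G.neighborSet v).ncard = 3) (htrans : ∀ u v : V, ∃ e : G ≃g G, e u = v)
    (hS : S.ncard ≤ 2) : ¬ IsFragment G S C := fun hC => by
  obtain ⟨S, C, hA⟩ := exists_isAtom hS hC
  exact hA.false_of_degree_eq_three (fun _ _ h => h.two_le_ncard_separator hconn htrans) hcubic htrans

end SimpleGraph

/-- every finite connected vertex-transitive cubic simple graph
is 3-connected: deleting any set of at most two vertices leaves a connected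
induced subgraph. -/
theorem cubic_vertexTransitive_three_connected {V : Type*} [Fintype V]
    (G : SimpleGraph V) (hconn : G.Connected)
    (hcubic : ∀ v : V, (G.neighborSet v).ncard = 3)
    (htrans : ∀ u v : V, ∃ e : G ≃g G, e u = v) :
    ∀ A : Set V, A.ncard ≤ 2 → (SimpleGraph.induce (Aᶜ) G).Connected := by
  intro A hA
  obtain ⟨v⟩ := hconn.nonempty
  obtain ⟨w, -, hw⟩ := exists_mem_notMem_of_ncard_lt_ncard (s := A) (t := G.neighborSet v)
    (by rw [hcubic]; omega)
  refine (connected_iff _).mpr ⟨?_, ⟨⟨w, hw⟩⟩⟩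
  by_contra hpre
  obtain ⟨C, hC⟩ := exists_isFragment_of_not_preconnected hpre
  exact not_isFragment_of_ncard_le_two hconn hcubic htrans hA hC
end

section
/- Spectral gap implies vertex expansion: let G be a finite simple graph on a vertex set V with |V| = n in which every vertex has degree exactly k, with k > 0, and let λ ≥ 0 be a real number such that for every function f : V → ℝ with ∑_{v ∈ V} f(v) = 0 one has |∑_{(u,v) : u adjacent to v} f(u)·f(v)| ≤ λ·∑_{v ∈ V} f(v)² (the sum being over ordered pairs of adjacent vertices). Then G is an ε-expander for ε = (1 − λ/k)/2: for every subset Δ ⊆ V with 2|Δ| ≤ n, the set ∂Δ = {v ∈ V ∖ Δ : v is adjacent to some vertex of Δ} satisfies |∂Δ| ≥ ε·|Δ|. -/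
open Finset

/-- spectral gap implies vertex expansion. If `G` is a finite
`k`-regular simple graph (`k > 0`) all of whose nontrivial eigenvalues are at
most `λ` in absolute value (expressed via the quadratic form of the adjacency
matrix on functions summing to zero), then `G` is an `ε`-expander for
`ε = (1 - λ/k)/2`. -/
theorem spectral_gap_implies_expansion {V : Type*} [Fintype V]
    (G : SimpleGraph V) [DecidableRel G.Adj]
    (k : ℕ) (hk : 0 < k) (hreg : ∀ v : V, G.degree v = k)
    (lam : ℝ) (hlam : 0 ≤ lam)
    (hspec : ∀ f : V → ℝ, (∑ v : V, f v) = 0 →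
      |∑ u : V, ∑ v : V, if G.Adj u v then f u * f v else 0| ≤
        lam * ∑ v : V, (f v) ^ 2) :
    ∀ Δ : Set V, 2 * Δ.ncard ≤ Fintype.card V →
      ((1 - lam / (k : ℝ)) / 2) * (Δ.ncard : ℝ) ≤
        (({v : V | v ∉ Δ ∧ ∃ u ∈ Δ, G.Adj u v}).ncard : ℝ) := by
  classical
  intro Δ hΔ
  set S : Finset V := Δ.toFinset with hS
  have haS : Δ.ncard = S.card := by rw [hS, Set.ncard_eq_toFinset_card']
  set B : Finset V := ({v : V | v ∉ Δ ∧ ∃ u ∈ Δ, G.Adj u v}).toFinset with hB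
  have hbB : ({v : V | v ∉ Δ ∧ ∃ u ∈ Δ, G.Adj u v}).ncard = B.card := by
    rw [hB, Set.ncard_eq_toFinset_card']
  rw [haS, hbB]
  set n : ℕ := Fintype.card V with hn
  set a : ℕ := S.card with ha
  set b : ℕ := B.card with hb
  have hb0 : (0:ℝ) ≤ b := by positivity
  by_cases ha0 : a = 0
  · simpa [ha0] using hb0
  by_cases hlk : (k : ℝ) ≤ lam
  · have h1 : ((1 - lam / k)/2 : ℝ) ≤ 0 := by
      have hk' : (0:ℝ) < k := by exact_mod_cast hk
      have : (1:ℝ) ≤ lam / k := by rw [le_div_iff₀ hk']; linarith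
      linarith
    calc ((1 - lam / (k:ℝ))/2) * (a:ℝ) ≤ 0 :=
          mul_nonpos_of_nonpos_of_nonneg h1 (Nat.cast_nonneg a)
      _ ≤ (b:ℝ) := hb0
  push_neg at hlk
  have hk' : (0:ℝ) < k := by exact_mod_cast hk
  have ha1 : 1 ≤ a := Nat.one_le_iff_ne_zero.mpr ha0
  have han : 2 * a ≤ n := by rwa [haS] at hΔ
  have hn0 : (0:ℝ) < n := by
    have : 0 < n := lt_of_lt_of_le (by omega) han
    exact_mod_cast this
  have hanR : 2 * (a:ℝ) ≤ n := by exact_mod_cast han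
  have haR : (1:ℝ) ≤ a := by exact_mod_cast ha1
  -- indicator and test function
  set χ : V → ℝ := fun v => if v ∈ S then 1 else 0 with hχ
  set A : V → V → ℝ := fun u v => if G.Adj u v then 1 else 0 with hA
  have hA_nonneg : ∀ u v, 0 ≤ A u v := by
    intro u v; by_cases h : G.Adj u v <;> simp [hA, h]
  have hχ0 : ∀ v, 0 ≤ χ v := by
    intro v; by_cases h : v ∈ S <;> simp [hχ, h]
  have hχ1 : ∀ v, χ v ≤ 1 := by
    intro v; by_cases h : v ∈ S <;> simp [hχ, h]
  have hχsq : ∀ v, χ v * χ v = χ v := by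
    intro v; by_cases h : v ∈ S <;> simp [hχ, h]
  have hχsum : ∑ v : V, χ v = a := by
    simp only [hχ]
    rw [Finset.sum_ite_mem, Finset.univ_inter, Finset.sum_const, nsmul_eq_mul,
      mul_one]
  have hArow : ∀ u, ∑ v : V, A u v = k := by
    intro u
    simp only [hA]
    rw [Finset.sum_boole]
    have : Finset.univ.filter (G.Adj u) = G.neighborFinset u := by
      ext v; simp [SimpleGraph.mem_neighborFinset]
    rw [this, SimpleGraph.card_neighborFinset_eq_degree, hreg u]
  have hAcol : ∀ v, ∑ u : V, A u v = k := by
    intro v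
    have h : ∀ u, A u v = A v u := by intro u; simp [hA, SimpleGraph.adj_comm]
    simp_rw [h]
    exact hArow v
  set f : V → ℝ := fun v => n * χ v - a with hf
  have hfsum : ∑ v : V, f v = 0 := by
    simp only [hf]
    rw [Finset.sum_sub_distrib, ← Finset.mul_sum, hχsum, Finset.sum_const,
      nsmul_eq_mul, Finset.card_univ]
    ring
  have hfsq : ∑ v : V, (f v) ^ 2 = (n:ℝ)^2 * a - (n:ℝ) * (a:ℝ)^2 := by
    have h : ∀ v, (f v)^2 = (n:ℝ)^2 * (χ v * χ v) - 2 * n * a * χ v + (a:ℝ)^2 := by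
      intro v; simp only [hf]; ring
    simp_rw [h, hχsq]
    rw [Finset.sum_add_distrib, Finset.sum_sub_distrib, ← Finset.mul_sum,
      ← Finset.mul_sum, hχsum, Finset.sum_const, nsmul_eq_mul, Finset.card_univ]
    ring
  -- quadratic form pieces
  set t : ℝ := ∑ u : V, ∑ v : V, A u v * χ u * χ v with ht
  have h2 : ∑ u : V, ∑ v : V, A u v * χ u = (k:ℝ) * a := by
    have h : ∀ u : V, ∑ v : V, A u v * χ u = χ u * k := by
      intro u
      rw [← Finset.sum_mul, hArow u]; ring
    simp_rw [h]
    rw [← Finset.sum_mul, hχsum]; ring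
  have h3 : ∑ u : V, ∑ v : V, A u v * χ v = (k:ℝ) * a := by
    rw [Finset.sum_comm]
    have h : ∀ v : V, ∑ u : V, A u v * χ v = χ v * k := by
      intro v
      rw [← Finset.sum_mul, hAcol v]; ring
    simp_rw [h]
    rw [← Finset.sum_mul, hχsum]; ring
  have h4 : ∑ u : V, ∑ v : V, A u v = (k:ℝ) * n := by
    simp_rw [hArow]
    rw [Finset.sum_const, nsmul_eq_mul, Finset.card_univ]
    ring
  have hQ : ∑ u : V, ∑ v : V, (if G.Adj u v then f u * f v else 0)
      = (n:ℝ)^2 * t - (n:ℝ) * k * (a:ℝ)^2 := by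
    have expand : (∑ u : V, ∑ v : V, (if G.Adj u v then f u * f v else 0))
        = (n:ℝ)^2 * (∑ u : V, ∑ v : V, A u v * χ u * χ v)
          - (n:ℝ)*a * (∑ u : V, ∑ v : V, A u v * χ u)
          - (n:ℝ)*a * (∑ u : V, ∑ v : V, A u v * χ v)
          + (a:ℝ)^2 * (∑ u : V, ∑ v : V, A u v) := by
      simp_rw [Finset.mul_sum, ← Finset.sum_sub_distrib, ← Finset.sum_add_distrib]
      refine Finset.sum_congr rfl fun u _ => Finset.sum_congr rfl fun v _ => ?_
      by_cases h : G.Adj u v <;> simp [hA, h, hf] <;> ring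
    rw [expand, ← ht, h2, h3, h4]
    ring
  -- the cross-edge count
  set m : ℝ := ∑ v : V, ∑ u : V, A u v * χ u * (1 - χ v) with hm
  have htm : t + m = (k:ℝ) * a := by
    rw [ht, hm, Finset.sum_comm (f := fun u v => A u v * χ u * χ v),
      ← Finset.sum_add_distrib]
    simp_rw [← Finset.sum_add_distrib]
    have : ∀ v : V, ∀ u : V,
        A u v * χ u * χ v + A u v * χ u * (1 - χ v) = A u v * χ u := by
      intro v u; ring
    simp_rw [this]
    rw [Finset.sum_comm]
    exact h2
  -- bound m ≤ k * b
  have hmb : m ≤ (k:ℝ) * b := by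
    have hinner_nonneg : ∀ v, 0 ≤ ∑ u : V, A u v * χ u := by
      intro v
      exact Finset.sum_nonneg fun u _ =>
        mul_nonneg (hA_nonneg u v) (hχ0 u)
    have hinner_le : ∀ v, ∑ u : V, A u v * χ u ≤ k := by
      intro v
      calc ∑ u : V, A u v * χ u ≤ ∑ u : V, A u v :=
            Finset.sum_le_sum fun u _ => by
              calc A u v * χ u ≤ A u v * 1 :=
                    mul_le_mul_of_nonneg_left (hχ1 u) (hA_nonneg u v)
                _ = A u v := mul_one _
        _ = k := hAcol v
    have key : ∀ v : V, ∑ u : V, A u v * χ u * (1 - χ v)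
        ≤ if v ∈ B then (k:ℝ) else 0 := by
      intro v
      have hfac : ∑ u : V, A u v * χ u * (1 - χ v)
          = (1 - χ v) * ∑ u : V, A u v * χ u := by
        rw [Finset.mul_sum]
        exact Finset.sum_congr rfl fun u _ => by ring
      by_cases hvB : v ∈ B
      · rw [if_pos hvB, hfac]
        calc (1 - χ v) * ∑ u : V, A u v * χ u
            ≤ 1 * (k:ℝ) := by
              apply mul_le_mul _ (hinner_le v) (hinner_nonneg v) (by norm_num)
              have := hχ0 v; linarith
          _ = (k:ℝ) := one_mul _
      · rw [if_neg hvB, hfac]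
        have hvB' : ¬ (v ∉ Δ ∧ ∃ u ∈ Δ, G.Adj u v) := by
          intro hcon
          exact hvB (by rw [hB]; simpa [Set.mem_toFinset] using hcon)
        by_cases hvΔ : v ∈ Δ
        · have : χ v = 1 := by simp [hχ, hS, Set.mem_toFinset, hvΔ]
          rw [this]; norm_num
        · have hnoadj : ∀ u ∈ Δ, ¬ G.Adj u v := by
            intro u hu hadj
            exact hvB' ⟨hvΔ, u, hu, hadj⟩
          have : ∑ u : V, A u v * χ u = 0 := by
            apply Finset.sum_eq_zero
            intro u _
            by_cases hu : u ∈ Δ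
            · have : A u v = 0 := by simp [hA, hnoadj u hu]
              rw [this]; ring
            · have : χ u = 0 := by simp [hχ, hS, Set.mem_toFinset, hu]
              rw [this]; ring
          rw [this]; simp
    calc m ≤ ∑ v : V, (if v ∈ B then (k:ℝ) else 0) :=
          Finset.sum_le_sum fun v _ => key v
      _ = (k:ℝ) * b := by
        rw [Finset.sum_ite_mem, Finset.univ_inter, Finset.sum_const,
          nsmul_eq_mul, hb]
        ring
  -- the spectral bound
  have hbound := hspec f hfsum
  rw [hQ, hfsq] at hbound
  have habs : (n:ℝ)^2 * t - (n:ℝ) * k * (a:ℝ)^2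
      ≤ lam * ((n:ℝ)^2 * a - (n:ℝ) * (a:ℝ)^2) :=
    le_trans (le_abs_self _) hbound
  -- substitute t = k a - m
  have htval : t = (k:ℝ) * a - m := by linarith
  rw [htval] at habs
  -- habs : n^2 (ka - m) - n k a^2 ≤ lam (n^2 a - n a^2)
  -- so n * m ≥ (k - lam) * a * (n - a)  after dividing by n
  have hkey : ((k:ℝ) - lam) * a * ((n:ℝ) - a) ≤ (n:ℝ) * m := by
    nlinarith [hn0, mul_pos hn0 hn0]
  -- n - a ≥ n / 2
  have hna : (n:ℝ) / 2 ≤ (n:ℝ) - a := by linarith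
  have hm2 : ((k:ℝ) - lam) * a / 2 ≤ m := by
    have h1 : ((k:ℝ) - lam) * a * ((n:ℝ)/2) ≤ ((k:ℝ) - lam) * a * ((n:ℝ) - a) := by
      apply mul_le_mul_of_nonneg_left hna
      have ha' : (0:ℝ) ≤ a := Nat.cast_nonneg a
      exact mul_nonneg (by linarith) ha'
    have h2' : ((k:ℝ) - lam) * a * ((n:ℝ)/2) ≤ (n:ℝ) * m := le_trans h1 hkey
    have h3 : (n:ℝ) * (((k:ℝ) - lam) * a / 2) ≤ (n:ℝ) * m := by
      have heq : (n:ℝ) * (((k:ℝ) - lam) * a / 2) = ((k:ℝ) - lam) * a * ((n:ℝ)/2) := by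
        ring
      rw [heq]; exact h2'
    exact le_of_mul_le_mul_left h3 hn0
  -- conclude
  have hfinal : ((k:ℝ) - lam) * a / 2 ≤ (k:ℝ) * b := le_trans hm2 hmb
  have heq : ((1 - lam / (k:ℝ)) / 2) * (a:ℝ) = ((k:ℝ) - lam) * a / 2 / k := by
    rw [eq_div_iff hk'.ne']
    field_simp
  rw [heq, div_le_iff₀ hk']
  linarith [hfinal]
end
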